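/- arXiv:1712.00228 — 11 statements merged into one kernel-verified Lean document; each statement's English description precedes it below -/
import Mathlib

section
/- For every positive integer m and every real number r ≥ 0, the binomial coefficient C((r+1)m, m) is at most ((r+1)^(r+1)/r^r)^m, where for r = 0 the right-hand side is interpreted as 1. -/
open Finset

/-- Generalized binomial coefficient `C(x, m)` for real `x` and natural `m`. -/
noncomputable def genChoose (x : ℝ) (m : ℕ) : ℝ :=
  (∏ i ∈ Finset.range m, (x - i)) / (Nat.factorial m)

/-- Monotonicity of `(1 + 1/x)^x`. -/
lemma sz_mono {a b : ℝ} (ha : 0 < a) (hab : a ≤ b) :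
    (1 + 1/a) ^ a ≤ (1 + 1/b) ^ b := by
  have hb : 0 < b := lt_of_lt_of_le ha hab
  have hp : (1:ℝ) ≤ b / a := (one_le_div ha).2 hab
  have hber : 1 + (b/a) * (1/b) ≤ (1 + 1/b) ^ (b/a) :=
    one_add_mul_self_le_rpow_one_add
      (le_trans (by norm_num : (-1:ℝ) ≤ 0) (by positivity)) hp
  have h1 : (b/a) * (1/b) = 1/a := by field_simp
  rw [h1] at hber
  have h2 : ((1 + 1/b) ^ (b/a)) ^ a = (1 + 1/b) ^ b := by
    rw [← Real.rpow_mul (by positivity)]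
    congr 1
    field_simp
  calc (1 + 1/a) ^ a ≤ ((1 + 1/b) ^ (b/a)) ^ a :=
        Real.rpow_le_rpow (by positivity) hber ha.le
    _ = (1 + 1/b) ^ b := h2

/-- Key step: `(i+1)^i * (s+i)^(s+i) ≤ (s+i+1)^(s+i) * i^i`. -/
lemma sz_step (s : ℝ) (hs : 0 ≤ s) (i : ℕ) :
    ((i:ℝ) + 1) ^ (i:ℝ) * (s + i) ^ (s + i) ≤ (s + i + 1) ^ (s + i) * (i:ℝ) ^ (i:ℝ) := by
  rcases Nat.eq_zero_or_pos i with rfl | hi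
  · simp only [Nat.cast_zero, add_zero, Real.rpow_zero, one_mul, mul_one]
    exact Real.rpow_le_rpow hs (by linarith) hs
  · have hi' : (0:ℝ) < i := by exact_mod_cast hi
    have hsi : (0:ℝ) < s + i := by linarith
    have h := sz_mono hi' (by linarith : (i:ℝ) ≤ s + i)
    have e1 : (1 + 1/(i:ℝ)) ^ (i:ℝ) = ((i:ℝ) + 1) ^ (i:ℝ) / (i:ℝ) ^ (i:ℝ) := by
      rw [show (1:ℝ) + 1/(i:ℝ) = ((i:ℝ)+1)/(i:ℝ) by field_simp,
        Real.div_rpow (by positivity) hi'.le]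
    have e2 : (1 + 1/(s + i)) ^ (s + i) = (s + i + 1) ^ (s + i) / (s + i) ^ (s + i) := by
      rw [show (1:ℝ) + 1/(s+i) = (s+i+1)/(s+i) by field_simp,
        Real.div_rpow (by positivity) hsi.le]
    rw [e1, e2, div_le_div_iff₀ (by positivity) (by positivity)] at h
    linarith

lemma sz_pos {x : ℝ} (hx : 0 ≤ x) : 0 < x ^ x := by
  rcases eq_or_lt_of_le hx with h0 | h0
  · rw [← h0, Real.rpow_zero]; norm_num
  · exact Real.rpow_pos_of_pos h0 _

/-- Telescoping bound for the product form. -/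
lemma sz_aux (s : ℝ) (hs : 0 ≤ s) (m : ℕ) :
    ∏ i ∈ range m, ((s + i + 1)/((i:ℝ)+1)) ≤
      (s + m) ^ (s + m) / ((m:ℝ) ^ (m:ℝ) * s ^ s) := by
  set g : ℕ → ℝ := fun i => (s + i) ^ (s + i) / (i:ℝ) ^ (i:ℝ) with hg
  have hgpos : ∀ i, 0 < g i := by
    intro i
    rcases Nat.eq_zero_or_pos i with rfl | hi
    · rcases eq_or_lt_of_le hs with h0 | h0
      · simp [hg, ← h0]
      · simp only [hg, Nat.cast_zero, add_zero, Real.rpow_zero, div_one]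
        exact Real.rpow_pos_of_pos h0 _
    · have hi' : (0:ℝ) < i := by exact_mod_cast hi
      exact div_pos (Real.rpow_pos_of_pos (by linarith) _) (Real.rpow_pos_of_pos hi' _)
  have step : ∀ i : ℕ, (s + i + 1)/((i:ℝ)+1) ≤ g (i+1) / g i := by
    intro i
    have hi0 : (0:ℝ) ≤ i := Nat.cast_nonneg i
    have hsi : (0:ℝ) < s + i + 1 := by linarith
    have hC : 0 < (s + i) ^ (s + i) := sz_pos (by linarith)
    have hD : 0 < (i:ℝ) ^ (i:ℝ) := sz_pos hi0
    have hB : 0 < ((i:ℝ) + 1) ^ ((i:ℝ) + 1) := Real.rpow_pos_of_pos (by linarith) _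
    have hgq : g (i+1) / g i =
        ((s + i + 1) ^ ((s + i) + 1) * (i:ℝ) ^ (i:ℝ)) /
          (((i:ℝ) + 1) ^ ((i:ℝ) + 1) * (s + i) ^ (s + i)) := by
      simp only [hg]
      push_cast
      field_simp
      ring_nf
    rw [hgq, div_le_div_iff₀ (by positivity) (mul_pos hB hC),
      Real.rpow_add_one (by positivity : (s+i+1) ≠ 0),
      Real.rpow_add_one (by positivity : ((i:ℝ)+1) ≠ 0)]
    have h := sz_step s hs i
    nlinarith [mul_le_mul_of_nonneg_left h (by positivity : (0:ℝ) ≤ (s+i+1) * ((i:ℝ)+1))]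
  have tele : ∀ n : ℕ, ∏ i ∈ range n, (g (i+1) / g i) = g n / g 0 := by
    intro n
    induction n with
    | zero => simp [div_self (hgpos 0).ne']
    | succ n ih =>
        rw [Finset.prod_range_succ, ih, div_mul_div_comm, mul_comm,
          mul_div_mul_right _ _ (hgpos n).ne']
  have hle : ∏ i ∈ range m, ((s + i + 1)/((i:ℝ)+1)) ≤ ∏ i ∈ range m, (g (i+1) / g i) := by
    apply Finset.prod_le_prod
    · intro i _
      positivity
    · intro i _
      exact step i
  have hg0 : g 0 = s ^ s := by simp [hg]
  calc ∏ i ∈ range m, ((s + i + 1)/((i:ℝ)+1)) ≤ ∏ i ∈ range m, (g (i+1) / g i) := hle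
    _ = g m / g 0 := tele m
    _ = (s + m) ^ (s + m) / ((m:ℝ) ^ (m:ℝ) * s ^ s) := by
        rw [hg0]; simp only [hg]; rw [div_div]

/-- Sondow–Zudilin: for `m ≥ 1` and real `r ≥ 0`,
`C((r+1)m, m) ≤ ((r+1)^(r+1)/r^r)^m` (with `0^0 = 1`, so the RHS is `1` when `r = 0`). -/
theorem sondow_zudilin_bound (m : ℕ) (hm : 1 ≤ m) (r : ℝ) (hr : 0 ≤ r) :
    genChoose ((r + 1) * m) m ≤ ((r + 1) ^ (r + 1) / r ^ r) ^ m := by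
  have hm' : (0:ℝ) < m := by exact_mod_cast hm
  set s : ℝ := r * m with hs_def
  have hs : 0 ≤ s := by positivity
  -- rewrite genChoose as a product of ratios
  have hnum : ∏ i ∈ range m, ((r + 1) * m - (i:ℝ)) = ∏ i ∈ range m, (s + i + 1) := by
    rw [← Finset.prod_range_reflect (fun i => (r + 1) * m - (i:ℝ)) m]
    apply Finset.prod_congr rfl
    intro j hj
    have hjm : j < m := Finset.mem_range.1 hj
    have hc : ((m - 1 - j : ℕ) : ℝ) = (m:ℝ) - 1 - j := by
      rw [Nat.sub_sub, Nat.cast_sub (by omega)]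
      push_cast
      ring
    simp only [hc, hs_def]
    ring
  have hfac : ((Nat.factorial m : ℕ) : ℝ) = ∏ i ∈ range m, ((i:ℝ) + 1) := by
    rw [← Finset.prod_range_add_one_eq_factorial]
    push_cast
    rfl
  have hgen : genChoose ((r + 1) * m) m = ∏ i ∈ range m, ((s + i + 1)/((i:ℝ)+1)) := by
    rw [genChoose, hnum, hfac, ← Finset.prod_div_distrib]
  rw [hgen]
  -- rewrite the RHS
  have hr1 : (0:ℝ) < r + 1 := by linarith
  have hrhs : ((r + 1) ^ (r + 1) / r ^ r) ^ m =
      (s + m) ^ (s + m) / ((m:ℝ) ^ (m:ℝ) * s ^ s) := by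
    have hsm : s + m = (r + 1) * m := by rw [hs_def]; ring
    have h1 : (s + m) ^ (s + m) = (r + 1) ^ ((r+1) * m) * (m:ℝ) ^ ((r+1) * m) := by
      rw [hsm, Real.mul_rpow hr1.le hm'.le]
    have h2 : s ^ s = r ^ (r * m) * (m:ℝ) ^ (r * m) := by
      rw [hs_def, Real.mul_rpow hr hm'.le]
    have h3 : (m:ℝ) ^ ((r+1) * m) = (m:ℝ) ^ (r * m) * (m:ℝ) ^ (m:ℝ) := by
      rw [← Real.rpow_add hm']
      ring_nf
    have h4 : ((r + 1) ^ (r + 1) / r ^ r) ^ m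
        = (r + 1) ^ ((r+1) * m) / r ^ (r * m) := by
      rw [← Real.rpow_natCast ((r + 1) ^ (r + 1) / r ^ r) m,
        Real.div_rpow (by positivity) (Real.rpow_nonneg hr r),
        Real.rpow_mul hr1.le, Real.rpow_mul hr]
    rw [h1, h2, h3, h4]
    have hp1 : 0 < r ^ (r * m) := by
      rcases eq_or_lt_of_le hr with h0 | h0
      · rw [← h0, zero_mul, Real.rpow_zero]
        norm_num
      · exact Real.rpow_pos_of_pos h0 _
    have hp2 : 0 < (m:ℝ) ^ (r * m) := Real.rpow_pos_of_pos hm' _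
    have hp3 : 0 < (m:ℝ) ^ (m:ℝ) := Real.rpow_pos_of_pos hm' _
    field_simp
  rw [hrhs]
  exact sz_aux s hs m
end

section
/- For a fixed prime p, the quantity p·C(⌊n(2p-1)/p⌋, n) is at most ((2 + 1/(p-1))^((p-1)/p) · (2 - 1/p))^n · p for every positive integer n; in particular C(2n, n) ≤ 4^n. -/
/-!
With weights `x = p/(2p-1)` and `y = (p-1)/(2p-1)`, which sum to `1`, a single term of the binomial
expansion of `(x + y)^N` gives `C(N, n) ≤ x⁻ⁿ · y^{-(N-n)}`. Here `x⁻¹ = 2 - 1/p`,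
`y⁻¹ = 2 + 1/(p-1) ≥ 1`, and for `N = ⌊n(2p-1)/p⌋` the exponent `N - n` is at most `n(p-1)/p`.
-/

theorem Nat.choose_mul_pow_mul_pow_le_add_pow {a b : ℕ} (hb : b ≤ a) {x y : ℝ}
    (hx : 0 ≤ x) (hy : 0 ≤ y) : (a.choose b : ℝ) * x ^ b * y ^ (a - b) ≤ (x + y) ^ a := by
  rw [add_pow]
  calc (a.choose b : ℝ) * x ^ b * y ^ (a - b) = x ^ b * y ^ (a - b) * a.choose b := by ring
    _ ≤ _ := Finset.single_le_sum (f := fun k => x ^ k * y ^ (a - k) * (a.choose k : ℝ))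
        (fun k _ => by positivity) (Finset.mem_range_succ_iff.mpr hb)

theorem Nat.choose_le_pow_mul_pow_of_inv_add_inv_eq_one {a b : ℕ} (hb : b ≤ a) {A B : ℝ}
    (hA : 0 < A) (hB : 0 < B) (hAB : B⁻¹ + A⁻¹ = 1) : (a.choose b : ℝ) ≤ B ^ b * A ^ (a - b) := by
  have key := Nat.choose_mul_pow_mul_pow_le_add_pow hb (inv_nonneg.mpr hB.le) (inv_nonneg.mpr hA.le)
  rw [hAB, one_pow] at key
  calc (a.choose b : ℝ) = a.choose b * ((B⁻¹ * B) ^ b * (A⁻¹ * A) ^ (a - b)) := by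
        rw [inv_mul_cancel₀ hB.ne', inv_mul_cancel₀ hA.ne', one_pow, one_pow, mul_one, mul_one]
    _ = (a.choose b * B⁻¹ ^ b * A⁻¹ ^ (a - b)) * (B ^ b * A ^ (a - b)) := by ring
    _ ≤ B ^ b * A ^ (a - b) := mul_le_of_le_one_left (by positivity) key

theorem Real.pow_le_rpow_pow {A s : ℝ} {t n : ℕ} (hA : 1 ≤ A) (ht : (t : ℝ) ≤ s * n) :
    A ^ t ≤ (A ^ s) ^ n := by
  rw [← rpow_natCast, ← rpow_natCast, ← rpow_mul (by linarith)]
  exact rpow_le_rpow_of_exponent_le hA ht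

theorem Nat.le_mul_div_of_le {n p q : ℕ} (hpq : p ≤ q) (hp : 0 < p) : n ≤ n * q / p :=
  (Nat.le_div_iff_mul_le hp).mpr (Nat.mul_le_mul_left n hpq)

theorem Nat.cast_mul_div_sub_le {n p q : ℕ} (hpq : p ≤ q) (hp : 0 < p) :
    ((n * q / p - n : ℕ) : ℝ) ≤ ((q : ℝ) - p) / p * n := by
  rw [Nat.cast_sub (Nat.le_mul_div_of_le hpq hp)]
  have hdiv : ((n * q / p : ℕ) : ℝ) ≤ (n * q : ℕ) / (p : ℝ) := Nat.cast_div_le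
  have hp' : (0 : ℝ) < p := by exact_mod_cast hp
  calc ((n * q / p : ℕ) : ℝ) - n ≤ (n * q : ℕ) / (p : ℝ) - n := by linarith
    _ = ((q : ℝ) - p) / p * n := by push_cast; field_simp

theorem inv_two_sub_one_div_add_inv_two_add_one_div_sub_one {x : ℝ} (hx : 1 < x) :
    (2 - 1 / x)⁻¹ + (2 + 1 / (x - 1))⁻¹ = 1 := by
  have hx0 : x ≠ 0 := by linarith
  have hx1 : x - 1 ≠ 0 := by linarith
  rw [show 2 - 1 / x = (2 * x - 1) / x by field_simp,
    show 2 + 1 / (x - 1) = (2 * x - 1) / (x - 1) by field_simp; ring,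
    inv_div, inv_div, ← add_div, div_eq_one_iff_eq (by linarith)]
  ring

theorem choose_floor_bound_general (p n : ℕ) (hp : p.Prime) :
    ((p * Nat.choose (n * (2 * p - 1) / p) n : ℕ) : ℝ) ≤
      ((2 + 1 / ((p : ℝ) - 1)) ^ (((p : ℝ) - 1) / p) * (2 - 1 / (p : ℝ))) ^ n * p ∧
    Nat.choose (2 * n) n ≤ 4 ^ n := by
  refine ⟨?_, Nat.centralBinom_le_four_pow n⟩
  have hp2 : 2 ≤ p := hp.two_le
  have hp1 : (1 : ℝ) < p := by exact_mod_cast hp.one_lt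
  set A : ℝ := 2 + 1 / ((p : ℝ) - 1)
  set B : ℝ := 2 - 1 / (p : ℝ)
  have hA : 1 ≤ A := by have : 0 < 1 / ((p : ℝ) - 1) := one_div_pos.mpr (by linarith); linarith
  have hB : 0 < B := by have : 1 / (p : ℝ) < 1 := (div_lt_one (by linarith)).mpr hp1; linarith
  have hexp : ((n * (2 * p - 1) / p - n : ℕ) : ℝ) ≤ ((p : ℝ) - 1) / p * n := by
    have hq : ((2 * p - 1 : ℕ) : ℝ) - p = p - 1 := by
      rw [Nat.cast_sub (by omega)]
      push_cast
      ring
    simpa only [hq] using Nat.cast_mul_div_sub_le (n := n) (by omega : p ≤ 2 * p - 1) hp.pos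
  have hchoose : ((n * (2 * p - 1) / p).choose n : ℝ) ≤ (A ^ (((p : ℝ) - 1) / p) * B) ^ n :=
    calc _ ≤ B ^ n * A ^ (n * (2 * p - 1) / p - n) :=
          Nat.choose_le_pow_mul_pow_of_inv_add_inv_eq_one (Nat.le_mul_div_of_le (by omega) hp.pos)
            (by linarith) hB (inv_two_sub_one_div_add_inv_two_add_one_div_sub_one hp1)
      _ ≤ B ^ n * (A ^ (((p : ℝ) - 1) / p)) ^ n := by gcongr; exact Real.pow_le_rpow_pow hA hexp
      _ = _ := by rw [mul_pow, mul_comm]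
  rw [Nat.cast_mul, mul_comm]
  gcongr

/-- For a prime `p` and `n ≥ 1`, `p·C(⌊n(2p-1)/p⌋, n)` is at most
`((2 + 1/(p-1))^((p-1)/p) · (2 - 1/p))^n · p`; in particular `C(2n, n) ≤ 4^n`. -/
theorem choose_floor_bound (p n : ℕ) (hp : p.Prime) (hn : 1 ≤ n) :
    ((p * Nat.choose (n * (2 * p - 1) / p) n : ℕ) : ℝ) ≤
      ((2 + 1 / ((p : ℝ) - 1)) ^ (((p : ℝ) - 1) / p) * (2 - 1 / (p : ℝ))) ^ n * p ∧
    Nat.choose (2 * n) n ≤ 4 ^ n :=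
  choose_floor_bound_general p n hp
end

section
/- Let p be a prime and n a positive integer. If A is a subset of (ℤ/pℤ)^n such that there do not exist p elements v_1, ..., v_p of A (with repetition allowed, but not all equal) satisfying v_1 + ... + v_p = 0, then |A| ≤ p · C(⌊n(2p-1)/p⌋, n). -/
/-!
Tao's slice rank argument. On `A^p` the zero-sum indicator `[x₁ + ⋯ + xₚ = 0]` is diagonal with
nonzero diagonal entries: off the diagonal by the hypothesis on `A`, on it because `p • a = 0`.
A diagonal tensor with nonzero diagonal on a set of size `|A|` has slice rank at least `|A|`; by
induction on the order, contracting the first coordinate against a vector of large support that is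
orthogonal to the slices in that direction. On the other hand the indicator is the polynomial
`∏ᵢ (1 - (∑ⱼ xⱼᵢ)^(p-1))` of degree at most `n(p-1)`, so every monomial has a block `xⱼ` of degree
at most `d = ⌊n(p-1)/p⌋`. Grouping monomials by that block and its exponent writes the indicator as
`p · C(n + d, d)` slices, and `n + d = ⌊n(2p-1)/p⌋`.
-/

open Finset Function Matrix

universe u

variable {K σ τ : Type*} {ι : Type} {k r : ℕ}

theorem Submodule.exists_mem_finrank_le_card_support [Field K] [DecidableEq K] [Fintype σ]
    (W : Submodule K (σ → K)) : ∃ h ∈ W, Module.finrank K W ≤ #{v | h v ≠ 0} := by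
  classical
  let supp (g : σ → K) : Finset σ := {v | g v ≠ 0}
  obtain ⟨_, ⟨h, hW, rfl⟩, hmax⟩ := Set.exists_max_image ((fun g => #(supp g)) '' W)
    id ((Set.finite_Iic (Fintype.card σ)).subset (by rintro _ ⟨g, -, rfl⟩; exact card_le_univ _))
    ⟨_, 0, W.zero_mem, rfl⟩
  refine ⟨h, hW, ?_⟩
  let restrict : W →ₗ[K] ({v // h v ≠ 0} → K) :=
    LinearMap.funLeft K K Subtype.val ∘ₗ W.subtype
  have hinj : Injective restrict := by
    refine (injective_iff_map_eq_zero restrict).2 fun w hw => ?_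
    have hvan : ∀ v, h v ≠ 0 → (w : σ → K) v = 0 := fun v hv => congrFun hw ⟨v, hv⟩
    -- `h + w` has support `supp h ∪ supp w`, so maximality of `supp h` forces `w = 0`
    have hdisj : Disjoint (supp h) (supp w) :=
      disjoint_filter.2 fun v _ hv => not_not.2 (hvan v hv)
    have hsub : supp h ∪ supp w ⊆ supp (h + w) := by
      intro v hv
      simp only [supp, mem_union, mem_filter, mem_univ, true_and] at hv ⊢
      by_cases hhv : h v = 0 <;> simp_all
    have hunion := (card_union_of_disjoint hdisj).symm.trans_le (card_le_card hsub)
    have hle : #(supp (h + w)) ≤ #(supp h) := hmax _ ⟨h + w, add_mem hW w.2, rfl⟩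
    have hw0 : supp w = ∅ := card_eq_zero.1 (by omega)
    ext v
    simpa [supp] using filter_eq_empty_iff.1 hw0 (mem_univ v)
  simpa [Fintype.card_subtype] using LinearMap.finrank_le_finrank_of_injective hinj

theorem Matrix.exists_mulVec_eq_zero_card_le {m : Type*} [Field K] [DecidableEq K] [Fintype m]
    [Fintype σ] (U : Matrix m σ K) :
    ∃ h, U *ᵥ h = 0 ∧ Fintype.card σ ≤ Fintype.card m + #{v | h v ≠ 0} := by
  obtain ⟨h, hker, hle⟩ := (LinearMap.ker U.mulVecLin).exists_mem_finrank_le_card_support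
  have hrank := LinearMap.finrank_range_add_finrank_ker U.mulVecLin
  have hrange := Submodule.finrank_le (LinearMap.range U.mulVecLin)
  simp only [Module.finrank_fintype_fun_eq_card] at hrank hrange
  exact ⟨h, hker, by omega⟩

section SliceRank

variable [CommSemiring K]

def HasSliceRankLE (T : (Fin k → σ) → K) (r : ℕ) : Prop :=
  ∃ (ι : Type) (_ : Fintype ι) (j : ι → Fin k) (f : ι → σ → K) (g : ι → (Fin k → σ) → K),
    Fintype.card ι ≤ r ∧ (∀ s, DependsOn (g s) {j s}ᶜ) ∧ ∀ x, T x = ∑ s, f s (x (j s)) * g s x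

theorem HasSliceRankLE.comp {T : (Fin k → σ) → K} (hT : HasSliceRankLE T r) (φ : τ → σ) :
    HasSliceRankLE (fun x => T (φ ∘ x)) r := by
  obtain ⟨ι, _, j, f, g, hcard, hg, hT⟩ := hT
  exact ⟨ι, inferInstance, j, fun s => f s ∘ φ, fun s x => g s (φ ∘ x), hcard,
    fun s _ _ hxy => hg s fun i hi => congrArg φ (hxy i hi), fun x => hT (φ ∘ x)⟩

theorem hasSliceRankLE_contract [Fintype σ] [Fintype ι] {T : (Fin (k + 1) → σ) → K}
    {j : ι → Fin (k + 1)} {f : ι → σ → K} {g : ι → (Fin (k + 1) → σ) → K}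
    (hg : ∀ s, DependsOn (g s) {j s}ᶜ) (hT : ∀ x, T x = ∑ s, f s (x (j s)) * g s x)
    (h : σ → K) (hfh : ∀ s, j s = 0 → ∑ v, f s v * h v = 0) :
    HasSliceRankLE (fun y => ∑ v, h v * T (Fin.cons v y)) (Fintype.card {s // j s ≠ 0}) := by
  classical
  refine ⟨{s // j s ≠ 0}, inferInstance, fun s => (j s).pred s.2, fun s => f s,
    fun s y => ∑ v, h v * g s (Fin.cons v y), le_rfl, fun s y y' hyy' => ?_, fun y => ?_⟩
  · refine sum_congr rfl fun v _ => congrArg _ (hg s fun i hi => ?_)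
    cases i using Fin.cases with
    | zero => rfl
    | succ i =>
      refine hyy' i fun hi' => hi ?_
      simp only [Set.mem_singleton_iff] at hi' ⊢
      rw [hi', Fin.succ_pred]
  have hzero : ∀ s, j s = 0 →
      ∑ v, h v * (f s ((Fin.cons v y : Fin (k + 1) → σ) (j s)) * g s (Fin.cons v y)) = 0 := by
    intro s hs
    rcases isEmpty_or_nonempty σ with hσ | ⟨⟨v₀⟩⟩
    · simp
    have hgs : ∀ v, g s (Fin.cons v y) = g s (Fin.cons v₀ y) := fun v =>
      hg s fun i hi => by
        cases i using Fin.cases with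
        | zero => exact absurd hs.symm hi
        | succ i => rfl
    calc ∑ v, h v * (f s ((Fin.cons v y : Fin (k + 1) → σ) (j s)) * g s (Fin.cons v y))
        = (∑ v, f s v * h v) * g s (Fin.cons v₀ y) := by
          rw [sum_mul]
          exact sum_congr rfl fun v _ => by rw [hs, Fin.cons_zero, hgs]; ring
      _ = 0 := by rw [hfh s hs, zero_mul]
  have hsucc : ∀ s (hs : j s ≠ 0) v,
      f s ((Fin.cons v y : Fin (k + 1) → σ) (j s)) = f s (y ((j s).pred hs)) := by
    intro s hs v
    conv_lhs => rw [← Fin.succ_pred (j s) hs]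
    rw [Fin.cons_succ]
  simp only [hT, mul_sum]
  rw [sum_comm, ← sum_filter_add_sum_filter_not univ (fun s => j s = 0),
    sum_eq_zero fun s hs => hzero s (mem_filter.1 hs).2, zero_add,
    sum_subtype _ (p := fun s => j s ≠ 0) fun s => by simp]
  refine sum_congr rfl fun s _ => ?_
  simp only [hsucc s s.2]
  exact sum_congr rfl fun v _ => by ring

end SliceRank

section Diagonal

variable [Zero K] {T : (Fin k → σ) → K}

theorem apply_const_ne_zero_of_support_eq (hT : support T = Set.range (const _)) (a : σ) :
    T (const _ a) ≠ 0 :=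
  (Set.ext_iff.1 hT _).2 ⟨a, rfl⟩

theorem apply_eq_zero_of_support_eq (hT : support T = Set.range (const _)) {x : Fin k → σ}
    {i i' : Fin k} (hx : x i ≠ x i') : T x = 0 :=
  not_ne_iff.1 fun hne => by
    obtain ⟨a, rfl⟩ := (Set.ext_iff.1 hT x).1 hne
    exact hx rfl

end Diagonal

theorem support_contract [CommSemiring K] [NoZeroDivisors K] [Fintype σ]
    {T : (Fin (k + 2) → σ) → K} (hT : support T = Set.range (const _)) (h : σ → K) :
    support (fun x : Fin (k + 1) → {v // h v ≠ 0} => ∑ v, h v * T (Fin.cons v (Subtype.val ∘ x))) =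
      Set.range (const _) := by
  ext x
  simp only [mem_support, Set.mem_range]
  constructor
  · intro hx
    obtain ⟨v, -, hv⟩ := exists_ne_zero_of_sum_ne_zero hx
    refine ⟨x 0, funext fun i => Subtype.ext (not_not.1 fun hi => right_ne_zero_of_mul hv ?_)⟩
    exact apply_eq_zero_of_support_eq hT (i := (0 : Fin (k + 1)).succ) (i' := i.succ) (by simpa)
  · rintro ⟨a, rfl⟩
    rw [sum_eq_single a.1]
    · have : (Fin.cons a.1 (Subtype.val ∘ const _ a) : Fin (k + 2) → σ) = const _ a.1 := by
        ext i; cases i using Fin.cases <;> rfl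
      rw [this]
      exact mul_ne_zero a.2 (apply_const_ne_zero_of_support_eq hT a.1)
    · intro v _ hva
      rw [apply_eq_zero_of_support_eq hT (i := 0) (i' := 1) (by simpa using hva), mul_zero]
    · simp

theorem card_le_of_hasSliceRankLE_two [Field K] [DecidableEq K] [Fintype σ]
    {T : (Fin 2 → σ) → K} (hT : support T = Set.range (const _)) (hr : HasSliceRankLE T r) :
    Fintype.card σ ≤ r := by
  obtain ⟨ι, _, j, f, g, hcard, hg, hsum⟩ := hr
  have hfin : ∀ i : Fin 2, i = 0 ∨ i = 1 := by decide
  let u s : σ → K := if j s = 0 then f s else fun w => g s ![w, w]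
  let c s : σ → K := if j s = 0 then fun v => g s ![v, v] else f s
  have hslice : ∀ s w v, f s (![w, v] (j s)) * g s ![w, v] = u s w * c s v := by
    intro s w v
    rcases hfin (j s) with hj | hj
    · have : g s ![w, v] = g s ![v, v] := hg s fun i hi => by
        rcases hfin i with rfl | rfl
        · exact absurd hj.symm hi
        · rfl
      simp [u, c, hj, this]
    · have : g s ![w, v] = g s ![w, w] := hg s fun i hi => by
        rcases hfin i with rfl | rfl
        · rfl
        · exact absurd hj.symm hi
      simp [u, c, hj, this, mul_comm]
  obtain ⟨h, hUh, hσ⟩ := (Matrix.of u).exists_mulVec_eq_zero_card_le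
  suffices hh : #{v | h v ≠ 0} = 0 by omega
  refine card_eq_zero.2 (filter_eq_empty_iff.2 fun v _ => not_not.2 ?_)
  have hdiag : ∑ w, h w * T ![w, v] = h v * T ![v, v] := by
    refine sum_eq_single v (fun w _ hwv => ?_) (by simp)
    rw [apply_eq_zero_of_support_eq hT (i := 0) (i' := 1) (by simpa using hwv), mul_zero]
  have hslices : ∑ w, h w * T ![w, v] = 0 := by
    simp only [hsum, hslice, mul_sum]
    rw [sum_comm]
    refine sum_eq_zero fun s _ => ?_
    calc ∑ w, h w * (u s w * c s v) = (∑ w, u s w * h w) * c s v := by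
          rw [sum_mul]; exact sum_congr rfl fun w _ => by ring
      _ = 0 := by rw [show ∑ w, u s w * h w = 0 from congrFun hUh s, zero_mul]
  have hvv : ![v, v] = const _ v := by ext i; rcases hfin i with rfl | rfl <;> rfl
  rw [hslices, hvv] at hdiag
  exact (mul_eq_zero.1 hdiag.symm).resolve_right (apply_const_ne_zero_of_support_eq hT v)

theorem exists_contraction_of_hasSliceRankLE [Field K] [DecidableEq K] {σ : Type u} [Fintype σ]
    {T : (Fin (k + 2) → σ) → K} (hT : support T = Set.range (const _)) (hr : HasSliceRankLE T r) :
    ∃ (τ : Type u) (_ : Fintype τ) (T' : (Fin (k + 1) → τ) → K) (r' : ℕ),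
      support T' = Set.range (const _) ∧ HasSliceRankLE T' r' ∧
        Fintype.card σ + r' ≤ Fintype.card τ + r := by
  obtain ⟨ι, _, j, f, g, hcard, hg, hsum⟩ := hr
  obtain ⟨h, hfh, hσ⟩ :=
    (Matrix.of fun (s : {s // j s = 0}) v => f s v).exists_mulVec_eq_zero_card_le
  refine ⟨{v // h v ≠ 0}, inferInstance, _, _, support_contract hT h,
    (hasSliceRankLE_contract hg hsum h fun s hs => congrFun hfh ⟨s, hs⟩).comp Subtype.val, ?_⟩
  have hsplit : Fintype.card {s // j s = 0} + Fintype.card {s // j s ≠ 0} = Fintype.card ι := by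
    rw [Fintype.card_subtype_compl, Nat.add_sub_of_le (Fintype.card_subtype_le _)]
  have hτ : Fintype.card {v // h v ≠ 0} = #{v | h v ≠ 0} := Fintype.card_subtype _
  omega

theorem card_le_of_hasSliceRankLE [Field K] [DecidableEq K] {σ : Type u} [Fintype σ] (hk : 2 ≤ k)
    {T : (Fin k → σ) → K} (hT : support T = Set.range (const _)) (hr : HasSliceRankLE T r) :
    Fintype.card σ ≤ r := by
  obtain ⟨k, rfl⟩ := Nat.exists_eq_add_of_le' hk
  induction k generalizing σ r with
  | zero => exact card_le_of_hasSliceRankLE_two hT hr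
  | succ k ih =>
    obtain ⟨τ, _, T', r', hT', hr', hcard⟩ := exists_contraction_of_hasSliceRankLE hT hr
    have := ih (by omega) hT' hr'
    omega

section Polynomial

variable [CommSemiring K]

theorem hasSliceRankLE_of_eq_sum {α : Type*} {Ξ : Type} {T : (Fin k → σ) → K} (S : Finset α)
    (E : Finset Ξ) (j : α → Fin k) (κ : α → Ξ) (hκ : ∀ a ∈ S, κ a ∈ E) (φ : Ξ → σ → K)
    (w : α → (Fin k → σ) → K) (hw : ∀ a ∈ S, DependsOn (w a) {j a}ᶜ)
    (hT : ∀ x, T x = ∑ a ∈ S, φ (κ a) (x (j a)) * w a x) :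
    HasSliceRankLE T (k * #E) := by
  classical
  refine ⟨(univ ×ˢ E : Finset (Fin k × Ξ)), inferInstance, fun s => s.1.1, fun s => φ s.1.2,
    fun s x => ∑ a ∈ S with (j a, κ a) = s.1, w a x, by simp, fun s x y hxy => ?_, fun x => ?_⟩
  · refine sum_congr rfl fun a ha => hw a (mem_filter.1 ha).1 fun i hi => hxy i ?_
    simpa [← congrArg Prod.fst (mem_filter.1 ha).2] using hi
  rw [hT, sum_coe_sort (univ ×ˢ E) fun s => φ s.2 (x s.1) * ∑ a ∈ S with (j a, κ a) = s, w a x,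
    ← sum_fiberwise_of_maps_to (g := fun a => (j a, κ a)) (t := univ ×ˢ E)
      fun a ha => mem_product.2 ⟨mem_univ _, hκ a ha⟩]
  refine sum_congr rfl fun s _ => ?_
  rw [mul_sum]
  refine sum_congr rfl fun a ha => ?_
  rw [← (mem_filter.1 ha).2]

theorem hasSliceRankLE_eval [NeZero k] [Fintype ι] (P : MvPolynomial (Fin k × ι) K) {D : ℕ}
    (hP : P.totalDegree ≤ D) :
    HasSliceRankLE (fun x : Fin k → ι → K => MvPolynomial.eval (uncurry x) P)
      (k * (Fintype.card ι + D / k).choose (D / k)) := by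
  classical
  have hblock : ∀ a ∈ P.support, ∃ i : Fin k, ∑ c, a (i, c) ≤ D / k := by
    intro a ha
    obtain ⟨i, -, hi⟩ := exists_min_image univ (fun i => ∑ c, a (i, c)) univ_nonempty
    refine ⟨i, (Nat.le_div_iff_mul_le (Nat.pos_of_neZero k)).2 ?_⟩
    have hdeg := MvPolynomial.le_totalDegree ha
    rw [Finsupp.sum_fintype _ _ fun _ => rfl, Fintype.sum_prod_type] at hdeg
    have := card_nsmul_le_sum univ (fun i => ∑ c, a (i, c)) _ hi
    simp only [card_univ, Fintype.card_fin, smul_eq_mul] at this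
    linarith
  choose! j hj using hblock
  -- the exponents of block `j a`, padded by a slack variable `none` to total degree `D / k`
  let κ (a : Fin k × ι →₀ ℕ) : Option ι →₀ ℕ :=
    Finsupp.equivFunOnFinite.symm fun o => o.elim (D / k - ∑ c, a (j a, c)) fun c => a (j a, c)
  have hE : #((univ : Finset (Option ι)).finsuppAntidiag (D / k)) =
      (Fintype.card ι + D / k).choose (D / k) := by
    simp [card_finsuppAntidiag_nat_eq_choose]
  rw [← hE]
  refine hasSliceRankLE_of_eq_sum P.support _ j κ (fun a ha => ?_)
    (fun e v => ∏ c, v c ^ e (some c))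
    (fun a x => MvPolynomial.coeff a P * ∏ i ∈ univ.erase (j a), ∏ c, x i c ^ a (i, c))
    (fun a _ x y hxy => ?_) fun x => ?_
  · have := hj a ha
    simp only [κ, mem_finsuppAntidiag, Finsupp.equivFunOnFinite_symm_apply_apply,
      Fintype.sum_option, Option.elim_none, Option.elim_some, subset_univ, and_true]
    omega
  · refine congrArg _ (prod_congr rfl fun i hi => ?_)
    rw [hxy i (ne_of_mem_erase hi)]
  · rw [MvPolynomial.eval_eq']
    refine sum_congr rfl fun a _ => ?_
    rw [Fintype.prod_prod_type, ← mul_prod_erase univ _ (mem_univ (j a))]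
    simp only [κ, uncurry_apply_pair, Finsupp.coe_equivFunOnFinite_symm, Option.elim]
    ring

end Polynomial

open MvPolynomial in
theorem hasSliceRankLE_zeroSum {F : Type*} [Field F] [Fintype F] [DecidableEq F] [NeZero k]
    [Fintype ι] :
    HasSliceRankLE (fun x : Fin k → ι → F => if ∑ i, x i = 0 then (1 : F) else 0)
      (k * (Fintype.card ι + Fintype.card ι * (Fintype.card F - 1) / k).choose
        (Fintype.card ι * (Fintype.card F - 1) / k)) := by
  set q := Fintype.card F
  let S (c : ι) : MvPolynomial (Fin k × ι) F := ∑ i, X (i, c)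
  let P : MvPolynomial (Fin k × ι) F := ∏ c, (1 - S c ^ (q - 1))
  have hq : q - 1 ≠ 0 := by have := Fintype.one_lt_card (α := F); omega
  have hP : P.totalDegree ≤ Fintype.card ι * (q - 1) := by
    have hS : ∀ c, (S c).totalDegree ≤ 1 :=
      fun c => totalDegree_finsetSum_le fun i _ => (totalDegree_X _).le
    calc P.totalDegree ≤ ∑ c, (1 - S c ^ (q - 1)).totalDegree := totalDegree_finsetProd _ _
      _ ≤ ∑ _c : ι, (q - 1) := sum_le_sum fun c _ =>
          (totalDegree_sub _ _).trans <| max_le (by simp) <|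
            (totalDegree_pow _ _).trans <| by simpa using Nat.mul_le_mul_left (q - 1) (hS c)
      _ = Fintype.card ι * (q - 1) := by simp
  convert hasSliceRankLE_eval P hP using 2 with x
  -- Fermat: `y ^ (q - 1)` is the indicator of `y ≠ 0`
  have hfactor : ∀ y : F, 1 - y ^ (q - 1) = if y = 0 then 1 else 0 := by
    intro y
    split_ifs with hy
    · rw [hy, zero_pow hq, sub_zero]
    · rw [FiniteField.pow_card_sub_one_eq_one y hy, sub_self]
  simp [P, S, hfactor, prod_boole, _root_.funext_iff]

theorem slice_rank_bound_general (p n : ℕ) (hp : p.Prime)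
    (A : Finset (Fin n → ZMod p))
    (hA : ∀ v : Fin p → (Fin n → ZMod p), (∀ i, v i ∈ A) → (∑ i, v i) = 0 →
      ∀ i j, v i = v j) :
    A.card ≤ p * Nat.choose (n * (2 * p - 1) / p) n := by
  have := Fact.mk hp
  have hdiag : support (fun x : Fin p → A =>
      if ∑ i, (x i : Fin n → ZMod p) = 0 then (1 : ZMod p) else 0) = Set.range (const _) := by
    ext x
    simp only [mem_support, ne_eq, ite_eq_right_iff, one_ne_zero, imp_false, not_not, Set.mem_range]
    constructor
    · intro hx
      exact ⟨x ⟨0, hp.pos⟩, funext fun i => Subtype.ext (hA _ (fun i => (x i).2) hx _ _)⟩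
    · rintro ⟨a, rfl⟩
      ext c
      simp
  have hcard := card_le_of_hasSliceRankLE hp.two_le hdiag (hasSliceRankLE_zeroSum.comp Subtype.val)
  have hdeg : n * (2 * p - 1) / p = n + n * (p - 1) / p := by
    rw [show n * (2 * p - 1) = n * (p - 1) + n * p by
      rw [← Nat.mul_add]; congr 1; have := hp.two_le; omega,
      Nat.add_mul_div_right _ _ hp.pos, add_comm]
  rw [hdeg, Nat.choose_symm_add]
  simpa using hcard

/-- Slice rank bound: if `A ⊆ (ℤ/pℤ)^n` contains no `p` elements (with repetition allowed, but
not all equal) summing to zero, then `|A| ≤ p·C(⌊n(2p-1)/p⌋, n)`. -/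
theorem slice_rank_bound (p n : ℕ) (hp : p.Prime) (hn : 1 ≤ n)
    (A : Finset (Fin n → ZMod p))
    (hA : ∀ v : Fin p → (Fin n → ZMod p), (∀ i, v i ∈ A) → (∑ i, v i) = 0 →
      ∀ i j, v i = v j) :
    A.card ≤ p * Nat.choose (n * (2 * p - 1) / p) n :=
  slice_rank_bound_general p n hp A hA
end

section
/- Let p be a prime and n a positive integer. If A is a subset of (ℤ/pℤ)^n containing no p not-all-equal elements (repetition allowed) summing to zero, then |A| ≤ ((2 + 1/(p-1))^((p-1)/p) · (2 - 1/p))^n. -/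
/-!
Tao's slice-rank form of the Ellenberg–Gijswijt argument. On `A ^ p` the diagonal tensor
`[x₁ = ⋯ = x_p]` coincides with `∏ₖ (1 - (∑ⱼ xⱼₖ) ^ (p - 1))`, because `p` elements of `A`
sum to zero exactly when they are all equal. This polynomial has degree `(p - 1) n`, so each
monomial has a block `j` of degree at most `D = (p - 1) n / p`; grouping monomials by that block
writes the tensor as a sum of `p · #{monomials of degree ≤ D in n variables}` slices. A diagonal
tensor with nonzero diagonal on `A` has slice rank `|A|` (induction on the number of variables,
contracting one variable against a vector of large support). Bounding the number of monomials by
`x ^ (-D) (1 - x) ^ (-n)` at `x = (p - 1) / (2p - 1)` gives `|A| ≤ p c ^ n`, and applying this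
to `A ^ r ⊆ (ℤ/pℤ) ^ (r n)` and letting `r → ∞` removes the factor `p`.
-/

open Finset

section LinearAlgebra

variable {F : Type*} [Field F] [DecidableEq F]

theorem Submodule.exists_finrank_le_card_support {D : Type*} [Fintype D]
    (W : Submodule F (D → F)) :
    ∃ w ∈ W, Module.finrank F W ≤ #{x | w x ≠ 0} := by
  classical
  let Realizes (T : Finset D) : Prop := ∀ y : D → F, ∃ w ∈ W, ∀ x ∈ T, w x = y x
  obtain ⟨T, hTmem, hTmax⟩ := exists_max_image {T | Realizes T} card
    ⟨∅, by simpa [Realizes] using ⟨0, W.zero_mem⟩⟩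
  have hT : Realizes T := (mem_filter.1 hTmem).2
  -- A vector of `W` vanishing on `T` but not at `x` would let the maximal `T` grow by `x`.
  have hdim : Module.finrank F W ≤ #T := by
    by_contra! hlt
    let res : W →ₗ[F] (T → F) := (LinearMap.funLeft F F ((↑) : T → D)).comp W.subtype
    obtain ⟨⟨w, hwW⟩, hres, hw0⟩ := Submodule.exists_mem_ne_zero_of_ne_bot
      (LinearMap.ker_ne_bot_of_finrank_lt (f := res) (by simpa using hlt))
    have hwT : ∀ x ∈ T, w x = 0 := fun x hx => congrFun (LinearMap.mem_ker.1 hres) ⟨x, hx⟩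
    obtain ⟨x, hx⟩ : ∃ x, w x ≠ 0 := by
      by_contra! h
      exact hw0 (Subtype.ext (funext h))
    have hxT : x ∉ T := fun h => hx (hwT x h)
    have hins : Realizes (insert x T) := by
      intro y
      obtain ⟨u, huW, hu⟩ := hT y
      refine ⟨u + ((y x - u x) / w x) • w, W.add_mem huW (W.smul_mem _ hwW), ?_⟩
      simp only [mem_insert, forall_eq_or_imp, Pi.add_apply, Pi.smul_apply, smul_eq_mul]
      refine ⟨by field_simp; ring, fun z hz => by simp [hu z hz, hwT z hz]⟩
    have := hTmax _ (mem_filter.2 ⟨mem_univ _, hins⟩)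
    rw [card_insert_of_notMem hxT] at this
    omega
  obtain ⟨w, hwW, hw⟩ := hT 1
  exact ⟨w, hwW, hdim.trans (card_le_card fun x hx => by simp [hw x hx])⟩

theorem exists_orthogonal_card_le_card_support_add {σ κ : Type*} (A : Finset σ) (J : Finset κ)
    (f : κ → σ → F) :
    ∃ h : σ → F, (∀ t ∈ J, ∑ z ∈ A, h z * f t z = 0) ∧ #A ≤ #{z ∈ A | h z ≠ 0} + #J := by
  classical
  let Φ := Matrix.mulVecLin (Matrix.of fun (t : J) (z : A) => f t z)
  obtain ⟨h, hker, hsupp⟩ := (LinearMap.ker Φ).exists_finrank_le_card_support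
  have hrank : #A ≤ Module.finrank F (LinearMap.ker Φ) + #J := by
    have := Φ.finrank_range_add_finrank_ker
    have := (LinearMap.range Φ).finrank_le
    simp_all only [Module.finrank_fintype_fun_eq_card, Fintype.card_coe]
    omega
  refine ⟨Function.extend Subtype.val h 0, fun t ht => ?_, ?_⟩
  · have := congrFun (LinearMap.mem_ker.1 hker) ⟨t, ht⟩
    simp only [Φ, Matrix.mulVecLin_apply, Matrix.mulVec, dotProduct, Matrix.of_apply,
      Pi.zero_apply] at this
    rw [← sum_coe_sort A]
    simpa only [Subtype.val_injective.extend_apply, mul_comm] using this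
  · calc #A ≤ #{z | h z ≠ 0} + #J := hrank.trans (Nat.add_le_add_right hsupp _)
      _ = #{z ∈ A | Function.extend Subtype.val h 0 z ≠ 0} + #J := by
        congr 1
        rw [card_filter, card_filter, ← sum_coe_sort A]
        simp only [Subtype.val_injective.extend_apply]

end LinearAlgebra

section SliceRank

variable {R F K σ ι : Type*} [DecidableEq σ]
variable {S : Finset K} {A : Finset σ} {I : Finset ι} {iv : ι → K}

def diagTensor [CommSemiring R] (S : Finset K) (A : Finset σ) (c : σ → R) (x : K → σ) : R :=
  ∑ a ∈ A, c a * ∏ j ∈ S, if x j = a then 1 else 0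

/-- On `A ^ S`, the tensor `T` has slice rank at most `#I`, witnessed by the slices
`x ↦ f t (x (iv t)) * g t x`. -/
structure IsSliceDecomposition [CommSemiring R] (S : Finset K) (A : Finset σ)
    (T : (K → σ) → R) (I : Finset ι) (iv : ι → K) (f : ι → σ → R) (g : ι → (K → σ) → R) :
    Prop where
  mem : ∀ t ∈ I, iv t ∈ S
  indep : ∀ t ∈ I, ∀ x y : K → σ, (∀ j ∈ S, j ≠ iv t → x j = y j) → g t x = g t y
  eq : ∀ x : K → σ, (∀ j ∈ S, x j ∈ A) → T x = ∑ t ∈ I, f t (x (iv t)) * g t x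

theorem diagTensor_eq_ite_of_mem [CommSemiring R] {x : K → σ} {j₀ : K} (hj₀ : j₀ ∈ S)
    (hx : x j₀ ∈ A) :
    diagTensor S A (1 : σ → R) x = if ∀ j ∈ S, x j = x j₀ then 1 else 0 := by
  rw [diagTensor, sum_eq_single (x j₀)]
  · simp [prod_boole]
  · intro a _ ha
    rw [prod_eq_zero hj₀ (if_neg (Ne.symm ha)), mul_zero]
  · exact absurd hx

theorem sum_mul_diagTensor_update [CommSemiring R] [DecidableEq K] {k : K} (hk : k ∈ S)
    (A : Finset σ) (c h : σ → R) (x : K → σ) :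
    ∑ z ∈ A, h z * diagTensor S A c (Function.update x k z) =
      diagTensor (S.erase k) A (h * c) x := by
  have hsplit : ∀ z a, (∏ j ∈ S, if Function.update x k z j = a then (1 : R) else 0) =
      (if z = a then 1 else 0) * ∏ j ∈ S.erase k, if x j = a then 1 else 0 := by
    intro z a
    rw [← mul_prod_erase S _ hk, Function.update_self]
    congr 1
    exact prod_congr rfl fun j hj => by rw [Function.update_of_ne (ne_of_mem_erase hj)]
  simp only [diagTensor, hsplit, mul_sum]
  rw [sum_comm]
  refine sum_congr rfl fun a ha => ?_
  simp only [mul_ite, mul_zero, ite_mul, zero_mul, Pi.mul_apply]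
  rw [sum_ite_eq' A a]
  simp only [if_pos ha]
  ring

theorem card_le_of_diag_eq_sum_mul [Field F] {c : σ → F} (hc : ∀ a ∈ A, c a ≠ 0)
    (u v : ι → σ → F)
    (huv : ∀ a ∈ A, ∀ b ∈ A, (if a = b then c a else 0) = ∑ t ∈ I, u t a * v t b) :
    #A ≤ #I := by
  classical
  let U : Matrix I A F := Matrix.of fun t a => u t a
  let V : Matrix I A F := Matrix.of fun t b => v t b
  have hdiag : Matrix.diagonal (fun a : A => c a) = U.transpose * V := by
    ext a b
    rw [Matrix.diagonal_apply, Matrix.mul_apply]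
    convert huv a a.2 b b.2 using 1
    · simp only [Subtype.ext_iff]
    · exact sum_coe_sort I fun t => u t a * v t b
  calc #A = Fintype.card {a : A // c a ≠ 0} := by
        rw [Fintype.card_subtype, filter_true_of_mem fun a _ => hc a.1 a.2, card_univ,
          Fintype.card_coe]
    _ = (U.transpose * V).rank := by rw [← hdiag, Matrix.rank_diagonal]
    _ ≤ V.rank := Matrix.rank_mul_le_right _ _
    _ ≤ #I := (Matrix.rank_le_card_height V).trans_eq (Fintype.card_coe I)

theorem IsSliceDecomposition.card_le_of_card_eq_two [Field F] [DecidableEq K] {c : σ → F}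
    {f : ι → σ → F} {g : ι → (K → σ) → F}
    (hT : IsSliceDecomposition S A (diagTensor S A c) I iv f g) (hS : #S = 2) (hc : ∀ a ∈ A, c a ≠ 0) : #A ≤ #I := by
  obtain ⟨j₁, j₂, hj, rfl⟩ := card_eq_two.1 hS
  let pt (a b : σ) : K → σ := fun j => if j = j₁ then a else b
  have hpt₁ (a b : σ) : pt a b j₁ = a := if_pos rfl
  have hpt₂ (a b : σ) : pt a b j₂ = b := if_neg hj.symm
  -- A slice with `iv t = j₁` depends on `(a, b)` through `f t a` and `g t (pt b b)`;
  -- one with `iv t = j₂` through `f t b` and `g t (pt a a)`.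
  refine card_le_of_diag_eq_sum_mul hc
    (fun t a => if iv t = j₁ then f t a else g t (pt a a))
    (fun t b => if iv t = j₁ then g t (pt b b) else f t b) fun a ha b hb => ?_
  have hmem : ∀ j ∈ ({j₁, j₂} : Finset K), pt a b j ∈ A := by
    simp only [mem_insert, mem_singleton, forall_eq_or_imp, forall_eq, hpt₁, hpt₂]
    exact ⟨ha, hb⟩
  have hdiag : diagTensor {j₁, j₂} A c (pt a b) = if a = b then c a else 0 := by
    rw [diagTensor, sum_eq_single b]
    · simp only [prod_pair hj, hpt₁, hpt₂]
      split_ifs with hab <;> simp [hab]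
    · intro a' _ hne
      simp [prod_pair hj, hpt₂, Ne.symm hne]
    · exact absurd hb
  rw [← hdiag, hT.eq _ hmem]
  refine sum_congr rfl fun t ht => ?_
  rcases mem_insert.1 (hT.mem t ht) with h₁ | h₂
  · rw [if_pos h₁, if_pos h₁, h₁, hpt₁, hT.indep t ht (pt a b) (pt b b) ?_]
    simp only [mem_insert, mem_singleton]
    rintro j (rfl | rfl) hne
    · exact absurd h₁ (Ne.symm hne)
    · simp only [hpt₂]
  · rw [mem_singleton] at h₂
    rw [if_neg (h₂ ▸ hj.symm), if_neg (h₂ ▸ hj.symm), h₂, hpt₂,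
      hT.indep t ht (pt a b) (pt a a) ?_, mul_comm]
    simp only [mem_insert, mem_singleton]
    rintro j (rfl | rfl) hne
    · simp only [hpt₁]
    · exact absurd h₂ (Ne.symm hne)

theorem IsSliceDecomposition.contract [CommSemiring R] [DecidableEq R] [DecidableEq K]
    {c : σ → R} {f : ι → σ → R} {g : ι → (K → σ) → R}
    (hT : IsSliceDecomposition S A (diagTensor S A c) I iv f g)
    {k : K} (hk : k ∈ S) {h : σ → R} (hh : ∀ t ∈ I, iv t = k → ∑ z ∈ A, h z * f t z = 0) :
    IsSliceDecomposition (S.erase k) {a ∈ A | h a ≠ 0}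
      (diagTensor (S.erase k) {a ∈ A | h a ≠ 0} (h * c)) {t ∈ I | iv t ≠ k} iv f
      (fun t x => ∑ z ∈ A, h z * g t (Function.update x k z)) where
  mem t ht := mem_erase.2 ⟨(mem_filter.1 ht).2, hT.mem t (mem_filter.1 ht).1⟩
  indep t ht x y hxy := by
    refine sum_congr rfl fun z _ =>
      congrArg _ (hT.indep t (mem_filter.1 ht).1 _ _ fun j hj hne => ?_)
    by_cases hjk : j = k
    · simp only [hjk, Function.update_self]
    · simp only [Function.update_of_ne hjk]
      exact hxy j (mem_erase.2 ⟨hjk, hj⟩) hne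
  eq x hx := by
    have hupd : ∀ z ∈ A, ∀ j ∈ S, Function.update x k z j ∈ A := by
      intro z hz j hj
      by_cases hjk : j = k
      · simpa [hjk] using hz
      · rw [Function.update_of_ne hjk]
        exact (mem_filter.1 (hx j (mem_erase.2 ⟨hjk, hj⟩))).1
    have hslice : ∀ t ∈ I, ∑ z ∈ A, h z * (f t (Function.update x k z (iv t)) *
        g t (Function.update x k z)) =
        if iv t ≠ k then f t (x (iv t)) * ∑ z ∈ A, h z * g t (Function.update x k z) else 0 := by
      intro t ht
      split_ifs with htk
      · simp only [Function.update_of_ne htk, mul_sum]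
        exact sum_congr rfl fun z _ => by ring
      · rw [not_ne_iff] at htk
        have hg : ∀ z, g t (Function.update x k z) = g t x := fun z =>
          hT.indep t ht _ _ fun j _ hj => Function.update_of_ne (htk ▸ hj) _ _
        simp only [htk, Function.update_self, hg, ← mul_assoc, ← sum_mul, hh t ht htk, zero_mul]
    calc diagTensor (S.erase k) {a ∈ A | h a ≠ 0} (h * c) x
        = diagTensor (S.erase k) A (h * c) x := by
          refine sum_filter_of_ne fun a _ hne => ?_
          contrapose! hne
          simp [hne]
      _ = ∑ z ∈ A, h z * diagTensor S A c (Function.update x k z) :=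
          (sum_mul_diagTensor_update hk A c h x).symm
      _ = ∑ t ∈ I, ∑ z ∈ A, h z * (f t (Function.update x k z (iv t)) *
            g t (Function.update x k z)) := by
          rw [sum_comm]
          refine sum_congr rfl fun z hz => ?_
          rw [hT.eq _ (hupd z hz), mul_sum]
      _ = _ := by rw [sum_congr rfl hslice, sum_filter]

theorem IsSliceDecomposition.card_le [Field F] [DecidableEq F] [DecidableEq K] {c : σ → F}
    {f : ι → σ → F} {g : ι → (K → σ) → F}
    (hT : IsSliceDecomposition S A (diagTensor S A c) I iv f g) (hS : 2 ≤ #S) (hc : ∀ a ∈ A, c a ≠ 0) : #A ≤ #I := by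
  obtain ⟨N, hN⟩ := Nat.exists_eq_add_of_le' hS
  clear hS
  induction N generalizing S A c I g with
  | zero => exact hT.card_le_of_card_eq_two hN hc
  | succ N ih =>
    obtain ⟨k, hk⟩ := card_pos.1 (by omega : 0 < #S)
    -- Contracting coordinate `k` against `h` kills the slices through `k`, and the diagonal
    -- survives on the support of `h`.
    obtain ⟨h, hh, hcard⟩ := exists_orthogonal_card_le_card_support_add A {t ∈ I | iv t = k} f
    have hrec := ih (hT.contract hk fun t ht htk => hh t (mem_filter.2 ⟨ht, htk⟩))
      (fun a ha => mul_ne_zero (mem_filter.1 ha).2 (hc a (mem_filter.1 ha).1))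
      (by rw [card_erase_of_mem hk]; omega)
    have hsplit : #{t ∈ I | iv t = k} + #{t ∈ I | iv t ≠ k} = #I :=
      card_filter_add_card_filter_not _
    omega

end SliceRank

section Polynomial

open MvPolynomial

def lowDegreeExponents (ι : Type*) [Fintype ι] [DecidableEq ι] (D : ℕ) : Finset (ι → ℕ) :=
  {μ ∈ Fintype.piFinset fun _ => range (D + 1) | ∑ k, μ k ≤ D}

theorem exists_sum_block_le_div {κ ι : Type*} [Fintype κ] [Nonempty κ] [Fintype ι]
    {d : ℕ} (e : κ × ι →₀ ℕ) (he : (e.sum fun _ n => n) ≤ d) :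
    ∃ j, ∑ k, e (j, k) ≤ d / Fintype.card κ := by
  have hlt : ∑ j, ∑ k, e (j, k) < ∑ _j : κ, (d / Fintype.card κ + 1) := by
    rw [← Fintype.sum_prod_type', ← Finsupp.sum_fintype e (fun _ n => n) fun _ => rfl,
      sum_const, card_univ, smul_eq_mul]
    exact he.trans_lt (Nat.lt_mul_div_succ d Fintype.card_pos)
  obtain ⟨j, -, hj⟩ := exists_lt_of_sum_lt hlt
  exact ⟨j, Nat.lt_succ_iff.1 hj⟩

/-- Every monomial of degree at most `d` in `card κ` blocks of variables has a block of degree at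
most `d / card κ`; grouping monomials by such a block and its exponents gives the slices. -/
theorem MvPolynomial.exists_isSliceDecomposition_eval {R κ ι : Type*} [CommSemiring R]
    [Fintype κ] [Nonempty κ] [DecidableEq κ] [Fintype ι] [DecidableEq ι]
    (P : MvPolynomial (κ × ι) R) {d : ℕ} (hP : P.totalDegree ≤ d) (A : Finset (ι → R)) :
    ∃ g, IsSliceDecomposition univ A (fun x => eval (Function.uncurry x) P)
      (univ ×ˢ lowDegreeExponents ι (d / Fintype.card κ)) Prod.fst
      (fun t y => ∏ k, y k ^ t.2 k) g := by
  choose! j hj using fun e (he : e ∈ P.support) =>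
    exists_sum_block_le_div e ((le_totalDegree he).trans hP)
  let block (e : κ × ι →₀ ℕ) : κ × (ι → ℕ) := (j e, fun k => e (j e, k))
  have hblock : ∀ e ∈ P.support, block e ∈ univ ×ˢ lowDegreeExponents ι (d / Fintype.card κ) := by
    intro e he
    simp only [block, lowDegreeExponents, mem_product, mem_univ, true_and, mem_filter,
      Fintype.mem_piFinset, mem_range]
    exact ⟨fun k => Nat.lt_succ_of_le ((single_le_sum (fun _ _ => Nat.zero_le _)
      (mem_univ k)).trans (hj e he)), hj e he⟩
  refine ⟨fun t x => ∑ e ∈ P.support with block e = t,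
    coeff e P * ∏ i ∈ univ.erase t.1, ∏ k, x i k ^ e (i, k), fun _ _ => mem_univ _, ?_, ?_⟩
  · intro t _ x y hxy
    refine sum_congr rfl fun e _ => congrArg _ (prod_congr rfl fun i hi => ?_)
    rw [hxy i (mem_univ i) (ne_of_mem_erase hi)]
  · intro x _
    rw [eval_eq', ← sum_fiberwise_of_maps_to hblock]
    refine sum_congr rfl fun t _ => ?_
    rw [mul_sum]
    refine sum_congr rfl fun e he => ?_
    obtain rfl := (mem_filter.1 he).2
    rw [Fintype.prod_prod_type, ← mul_prod_erase univ _ (mem_univ (j e))]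
    simp only [Function.uncurry, block]
    ring

end Polynomial

section ZeroSums

open MvPolynomial

/-- `A` contains no `m` elements, not all equal, summing to zero (repetitions allowed). -/
def NoNontrivialZeroSums {G : Type*} [AddCommMonoid G] (m : ℕ) (A : Finset G) : Prop :=
  ∀ v : Fin m → G, (∀ i, v i ∈ A) → ∑ i, v i = 0 → ∀ i j, v i = v j

theorem NoNontrivialZeroSums.piFinset {G : Type*} [AddCommMonoid G] {m : ℕ} {A : Finset G}
    (hA : NoNontrivialZeroSums m A) (ι : Type*) [Fintype ι] [DecidableEq ι] :
    NoNontrivialZeroSums m (Fintype.piFinset fun _ : ι => A) := by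
  intro v hv hsum i j
  funext k
  refine hA (fun i => v i k) (fun i => Fintype.mem_piFinset.1 (hv i) k) ?_ i j
  simpa only [Finset.sum_apply, Pi.zero_apply] using congrFun hsum k

theorem NoNontrivialZeroSums.map {G H : Type*} [AddCommMonoid G] [AddCommMonoid H] {m : ℕ}
    {A : Finset G} (hA : NoNontrivialZeroSums m A) (e : G ≃+ H) :
    NoNontrivialZeroSums m (A.map e.toEquiv.toEmbedding) := by
  intro v hv hsum i j
  have hvA : ∀ i, e.symm (v i) ∈ A := fun i => by
    obtain ⟨a, ha, hav⟩ := mem_map.1 (hv i)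
    simpa [← hav] using ha
  exact e.symm.injective (hA _ hvA (by rw [← map_sum, hsum, map_zero]) i j)

variable (K κ ι : Type*) [Field K] [Fintype K] [Fintype κ] [Fintype ι]

noncomputable def zeroSumIndicator : MvPolynomial (κ × ι) K :=
  ∏ k, (1 - (∑ j, X (j, k)) ^ (Fintype.card K - 1))

theorem totalDegree_zeroSumIndicator_le :
    (zeroSumIndicator K κ ι).totalDegree ≤ (Fintype.card K - 1) * Fintype.card ι := by
  refine (totalDegree_finsetProd _ _).trans ?_
  rw [mul_comm, ← smul_eq_mul, ← card_univ (α := ι), ← sum_const]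
  refine sum_le_sum fun k _ => (totalDegree_sub _ _).trans (max_le (by simp) ?_)
  refine (totalDegree_pow _ _).trans (mul_le_of_le_one_right (Nat.zero_le _) ?_)
  exact (totalDegree_finsetSum _ _).trans (Finset.sup_le fun j _ => (totalDegree_X _).le)

variable {K κ ι}

theorem eval_zeroSumIndicator [DecidableEq K] (x : κ → ι → K) :
    eval (Function.uncurry x) (zeroSumIndicator K κ ι) = if ∑ j, x j = 0 then 1 else 0 := by
  have hcoord (s : K) : 1 - s ^ (Fintype.card K - 1) = if s = 0 then 1 else 0 := by
    split_ifs with hs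
    · simp [hs, Nat.sub_ne_zero_of_lt Fintype.one_lt_card]
    · rw [FiniteField.pow_card_sub_one_eq_one s hs, sub_self]
  simp only [zeroSumIndicator, map_prod, map_sub, map_one, map_pow, map_sum, eval_X,
    Function.uncurry_apply_pair, hcoord, prod_boole, funext_iff, Finset.sum_apply, Pi.zero_apply,
    mem_univ, true_implies]

end ZeroSums

section Bound

open MvPolynomial

variable {ι : Type*} [Fintype ι] {p : ℕ} [Fact p.Prime]

theorem NoNontrivialZeroSums.diagTensor_eq_eval {A : Finset (ι → ZMod p)}
    (hA : NoNontrivialZeroSums p A) {x : Fin p → ι → ZMod p} (hx : ∀ j, x j ∈ A) :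
    diagTensor univ A 1 x = eval (Function.uncurry x) (zeroSumIndicator (ZMod p) (Fin p) ι) := by
  have h0 : 0 < p := (Fact.out : p.Prime).pos
  rw [eval_zeroSumIndicator, diagTensor_eq_ite_of_mem (mem_univ ⟨0, h0⟩) (hx _)]
  congr 1
  refine propext ⟨fun h => ?_, fun h j _ => hA x hx h j _⟩
  rw [sum_congr rfl h, sum_const, card_univ, Fintype.card_fin]
  ext k
  simp

theorem NoNontrivialZeroSums.card_le_mul_card_lowDegreeExponents [DecidableEq ι]
    {A : Finset (ι → ZMod p)} (hA : NoNontrivialZeroSums p A) :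
    #A ≤ p * #(lowDegreeExponents ι ((p - 1) * Fintype.card ι / p)) := by
  obtain ⟨g, hg⟩ := (zeroSumIndicator (ZMod p) (Fin p) ι).exists_isSliceDecomposition_eval
    (totalDegree_zeroSumIndicator_le _ _ _) A
  have hT : IsSliceDecomposition univ A (diagTensor univ A 1) _ Prod.fst
      (fun (t : Fin p × (ι → ℕ)) y => ∏ k, y k ^ t.2 k) g :=
    ⟨hg.mem, hg.indep, fun x hx => (hA.diagTensor_eq_eval fun j => hx j (mem_univ j)).trans
      (hg.eq x hx)⟩
  simpa [ZMod.card, card_product] using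
    hT.card_le (by simpa using (Fact.out : p.Prime).two_le) fun _ _ => one_ne_zero

end Bound

theorem card_lowDegreeExponents_le (ι : Type*) [Fintype ι] [DecidableEq ι] (D : ℕ) {x : ℝ}
    (hx₀ : 0 < x) (hx₁ : x < 1) :
    (#(lowDegreeExponents ι D) : ℝ) ≤ (1 / x) ^ D * (1 / (1 - x)) ^ Fintype.card ι := by
  rw [div_pow, one_pow, one_div_mul_eq_div, le_div_iff₀ (pow_pos hx₀ D)]
  have hgeom : ∑ e ∈ range (D + 1), x ^ e ≤ 1 / (1 - x) := by
    have := geom_sum_Ico_le_of_lt_one (m := 0) (n := D + 1) hx₀.le hx₁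
    rwa [← range_eq_Ico, pow_zero] at this
  calc (#(lowDegreeExponents ι D) : ℝ) * x ^ D
      ≤ ∑ μ ∈ lowDegreeExponents ι D, x ^ ∑ k, μ k := by
        rw [card_eq_sum_ones, Nat.cast_sum, sum_mul]
        exact sum_le_sum fun μ hμ => by
          simpa using pow_le_pow_of_le_one hx₀.le hx₁.le (mem_filter.1 hμ).2
    _ ≤ ∑ μ ∈ Fintype.piFinset fun _ : ι => range (D + 1), x ^ ∑ k, μ k :=
        sum_le_sum_of_subset_of_nonneg (filter_subset _ _) fun _ _ _ => by positivity
    _ = ∏ _k : ι, ∑ e ∈ range (D + 1), x ^ e := by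
        rw [prod_univ_sum]
        exact sum_congr rfl fun μ _ => (prod_pow_eq_pow_sum _ _ _).symm
    _ ≤ (1 / (1 - x)) ^ Fintype.card ι := by
        rw [← card_univ, ← prod_const]
        exact prod_le_prod (fun _ _ => sum_nonneg fun _ _ => by positivity) fun _ _ => hgeom

noncomputable def zeroSumFreeBase (p : ℕ) : ℝ :=
  (2 + 1 / ((p : ℝ) - 1)) ^ (((p : ℝ) - 1) / p) * (2 - 1 / (p : ℝ))

theorem zeroSumFreeBase_pos {p : ℕ} (hp : 2 ≤ p) : 0 < zeroSumFreeBase p := by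
  have hp' : (2 : ℝ) ≤ p := by exact_mod_cast hp
  have h₁ : 0 < 2 + 1 / ((p : ℝ) - 1) := by
    have : 0 < 1 / ((p : ℝ) - 1) := one_div_pos.2 (by linarith)
    linarith
  have h₂ : 0 < 2 - 1 / (p : ℝ) := by
    have : 1 / (p : ℝ) ≤ 1 / 2 := one_div_le_one_div_of_le two_pos hp'
    linarith
  exact mul_pos (Real.rpow_pos_of_pos h₁ _) h₂

theorem NoNontrivialZeroSums.card_le_mul_zeroSumFreeBase_pow {ι : Type*} [Fintype ι] {p : ℕ}
    [Fact p.Prime] {A : Finset (ι → ZMod p)} (hA : NoNontrivialZeroSums p A) :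
    (#A : ℝ) ≤ p * zeroSumFreeBase p ^ Fintype.card ι := by
  classical
  have hp : (2 : ℝ) ≤ p := by exact_mod_cast (Fact.out : p.Prime).two_le
  set n := Fintype.card ι
  set D := (p - 1) * n / p
  -- the choice of `x` minimising `x ^ (-θ) / (1 - x)` for `θ = (p - 1) / p`
  set x : ℝ := (p - 1) / (2 * p - 1)
  have hx₀ : 0 < x := div_pos (by linarith) (by linarith)
  have hx₁ : x < 1 := (div_lt_one (by linarith)).2 (by linarith)
  have hinv : 1 / x = 2 + 1 / ((p : ℝ) - 1) := by
    have : (p : ℝ) - 1 ≠ 0 := by linarith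
    simp only [x, one_div_div]
    field_simp
    ring
  have hinv' : 1 / (1 - x) = 2 - 1 / (p : ℝ) := by
    have hne : 2 * (p : ℝ) - 1 ≠ 0 := by linarith
    have h1x : 1 - x = p / (2 * p - 1) := by
      rw [eq_div_iff hne, sub_mul, one_mul, div_mul_cancel₀ _ hne]
      ring
    have : (p : ℝ) ≠ 0 := by linarith
    rw [h1x, one_div_div]
    field_simp
  have hD : (D : ℝ) ≤ ((p : ℝ) - 1) / p * n := by
    calc (D : ℝ) ≤ (((p - 1) * n : ℕ) : ℝ) / p := Nat.cast_div_le
      _ = ((p : ℝ) - 1) / p * n := by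
        rw [Nat.cast_mul, Nat.cast_sub (Fact.out : p.Prime).one_le]
        ring
  have hpow : (1 / x) ^ D ≤ ((1 / x) ^ (((p : ℝ) - 1) / p)) ^ n := by
    rw [← Real.rpow_natCast, ← Real.rpow_natCast, ← Real.rpow_mul (by positivity)]
    exact Real.rpow_le_rpow_of_exponent_le (one_le_one_div hx₀ hx₁.le) hD
  calc (#A : ℝ) ≤ p * #(lowDegreeExponents ι D) := by
        exact_mod_cast hA.card_le_mul_card_lowDegreeExponents
    _ ≤ p * ((1 / x) ^ D * (1 / (1 - x)) ^ n) := by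
        gcongr
        exact card_lowDegreeExponents_le ι D hx₀ hx₁
    _ ≤ p * (((1 / x) ^ (((p : ℝ) - 1) / p)) ^ n * (1 / (1 - x)) ^ n) := by
        gcongr
    _ = p * zeroSumFreeBase p ^ n := by
        rw [← mul_pow, hinv, hinv', zeroSumFreeBase]

theorem le_of_forall_pow_le_mul_pow {α : Type*} [Field α] [LinearOrder α] [IsStrictOrderedRing α]
    [Archimedean α] {a b C : α} (hb : 0 < b) (h : ∀ r : ℕ, a ^ r ≤ C * b ^ r) : a ≤ b := by
  by_contra! hba
  obtain ⟨r, hr⟩ := pow_unbounded_of_one_lt C ((one_lt_div hb).2 hba)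
  rw [div_pow, lt_div_iff₀ (pow_pos hb r)] at hr
  exact (h r).not_gt hr

theorem slice_rank_bound_amplified_general (p n : ℕ) (hp : p.Prime)
    (A : Finset (Fin n → ZMod p))
    (hA : ∀ v : Fin p → (Fin n → ZMod p), (∀ i, v i ∈ A) → (∑ i, v i) = 0 →
      ∀ i j, v i = v j) :
    (A.card : ℝ) ≤ ((2 + 1 / ((p : ℝ) - 1)) ^ (((p : ℝ) - 1) / p) * (2 - 1 / (p : ℝ))) ^ n := by
  have : Fact p.Prime := ⟨hp⟩
  have hA : NoNontrivialZeroSums p A := hA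
  change (#A : ℝ) ≤ zeroSumFreeBase p ^ n
  refine le_of_forall_pow_le_mul_pow (C := (p : ℝ)) (pow_pos (zeroSumFreeBase_pos hp.two_le) n)
    fun r => ?_
  -- `A ^ r`, flattened into `(ZMod p) ^ (Fin r × Fin n)`
  have hpow := ((hA.piFinset (Fin r)).map (LinearEquiv.curry (ZMod p) (ZMod p) (Fin r)
    (Fin n)).symm.toAddEquiv).card_le_mul_zeroSumFreeBase_pow
  simpa only [card_map, Fintype.card_piFinset, prod_const, card_univ, Fintype.card_prod,
    Fintype.card_fin, Nat.cast_pow, mul_comm r n, pow_mul] using hpow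

/-- If `A ⊆ (ℤ/pℤ)^n` contains no `p` not-all-equal elements (repetition allowed) summing to
zero, then `|A| ≤ ((2 + 1/(p-1))^((p-1)/p) · (2 - 1/p))^n`. -/
theorem slice_rank_bound_amplified (p n : ℕ) (hp : p.Prime) (hn : 1 ≤ n)
    (A : Finset (Fin n → ZMod p))
    (hA : ∀ v : Fin p → (Fin n → ZMod p), (∀ i, v i ∈ A) → (∑ i, v i) = 0 →
      ∀ i j, v i = v j) :
    (A.card : ℝ) ≤ ((2 + 1 / ((p : ℝ) - 1)) ^ (((p : ℝ) - 1) / p) * (2 - 1 / (p : ℝ))) ^ n :=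
  slice_rank_bound_amplified_general p n hp A hA
end

section
/- Let p be a prime and n ≥ 1. Assume (ℤ/pℤ)^n satisfies Property D, and assume the slice-rank bound: every subset of (ℤ/pℤ)^n with no p not-all-equal elements summing to zero has size at most p·C(⌊n(2p-1)/p⌋, n). Then the Erdős–Ginzburg–Ziv constant satisfies s((ℤ/pℤ)^n) ≤ p(p-1)·C(⌊n(2p-1)/p⌋, n) + 1. -/
/-- The Erdős–Ginzburg–Ziv constant of a finite abelian group `A`: the least `ℓ` such that
every sequence (multiset) over `A` of length at least `ℓ` has a zero-sum subsequence of length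
exactly `exp(A)`. -/
noncomputable def EGZ (A : Type*) [AddCommMonoid A] : ℕ :=
  sInf {ℓ | ∀ S : Multiset A, ℓ ≤ Multiset.card S →
    ∃ T ≤ S, Multiset.card T = AddMonoid.exponent A ∧ T.sum = 0}

/-- If `(ℤ/pℤ)^n` satisfies Property D and the slice-rank bound holds, then
`s((ℤ/pℤ)^n) ≤ p(p-1)·C(⌊n(2p-1)/p⌋, n) + 1`. -/
theorem EGZ_of_propD (p n : ℕ) (hp : p.Prime) (hn : 1 ≤ n)
    (propD : ∀ S : Multiset (Fin n → ZMod p),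
      Multiset.card S = EGZ (Fin n → ZMod p) - 1 →
      (¬ ∃ T ≤ S, Multiset.card T = p ∧ T.sum = 0) →
      ∃ B : Finset (Fin n → ZMod p), S = (p - 1) • B.val)
    (sliceRank : ∀ A : Finset (Fin n → ZMod p),
      (∀ v : Fin p → (Fin n → ZMod p), (∀ i, v i ∈ A) → (∑ i, v i) = 0 → ∀ i j, v i = v j) →
      A.card ≤ p * Nat.choose (n * (2 * p - 1) / p) n) :
    EGZ (Fin n → ZMod p) ≤ p * (p - 1) * Nat.choose (n * (2 * p - 1) / p) n + 1 := by
  classical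
  have : NeZero p := ⟨hp.ne_zero⟩
  -- p • x = 0 for all x
  have hps : ∀ x : Fin n → ZMod p, p • x = 0 := by
    intro x
    funext i
    show p • x i = 0
    rw [nsmul_eq_mul, ZMod.natCast_self, zero_mul]
  -- exponent is p
  have hexp : AddMonoid.exponent (Fin n → ZMod p) = p := by
    have hnt : Nontrivial (Fin n → ZMod p) := by
      have : Nontrivial (ZMod p) := ZMod.nontrivial_iff.mpr hp.one_lt.ne'
      have : Nonempty (Fin n) := ⟨⟨0, hn⟩⟩
      exact Function.nontrivial
    have hdvd : AddMonoid.exponent (Fin n → ZMod p) ∣ p :=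
      AddMonoid.exponent_dvd_of_forall_nsmul_eq_zero hps
    rcases (Nat.dvd_prime hp).mp hdvd with h | h
    · obtain ⟨x, hx⟩ := exists_ne (0 : Fin n → ZMod p)
      have := AddMonoid.exponent_nsmul_eq_zero x
      rw [h, one_nsmul] at this
      exact absurd this hx
    · exact h
  have hEGZdef : EGZ (Fin n → ZMod p) =
      sInf {ℓ | ∀ S : Multiset (Fin n → ZMod p), ℓ ≤ Multiset.card S →
        ∃ T ≤ S, Multiset.card T = p ∧ T.sum = 0} := by
    unfold EGZ
    rw [hexp]
  set Sset : Set ℕ := {ℓ | ∀ S : Multiset (Fin n → ZMod p), ℓ ≤ Multiset.card S →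
        ∃ T ≤ S, Multiset.card T = p ∧ T.sum = 0} with hSset
  -- the set is nonempty (pigeonhole)
  have hmem : (p - 1) * p ^ n + 1 ∈ Sset := by
    intro S hlen
    have hbig : ∃ a, p ≤ S.count a := by
      by_contra hcon
      push_neg at hcon
      have h1 : Multiset.card S ≤ (p - 1) * S.toFinset.card := by
        rw [← Multiset.toFinset_sum_count_eq]
        calc ∑ a ∈ S.toFinset, S.count a ≤ ∑ _a ∈ S.toFinset, (p - 1) :=
              Finset.sum_le_sum (fun a _ => by have := hcon a; omega)
          _ = S.toFinset.card * (p - 1) := by rw [Finset.sum_const, smul_eq_mul]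
          _ = (p - 1) * S.toFinset.card := mul_comm _ _
      have h2 : S.toFinset.card ≤ p ^ n := by
        have := Finset.card_le_univ S.toFinset
        simpa using this
      have h3 : Multiset.card S ≤ (p - 1) * p ^ n :=
        h1.trans (Nat.mul_le_mul_left _ h2)
      omega
    obtain ⟨a, ha⟩ := hbig
    refine ⟨Multiset.replicate p a, Multiset.le_count_iff_replicate_le.mp ha, ?_, ?_⟩
    · exact Multiset.card_replicate p a
    · rw [Multiset.sum_replicate]
      exact hps a
  have hne : Sset.Nonempty := ⟨_, hmem⟩
  have hs_mem : sInf Sset ∈ Sset := Nat.sInf_mem hne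
  rw [hEGZdef]
  by_contra hcon
  push_neg at hcon
  set C := Nat.choose (n * (2 * p - 1) / p) n with hC
  set s := sInf Sset with hs
  -- extremal sequence of length s - 1
  have h1 : s - 1 ∉ Sset := Nat.notMem_of_lt_sInf (by omega)
  simp only [hSset, Set.mem_setOf_eq, not_forall] at h1
  push_neg at h1
  obtain ⟨S, hSlen, hST⟩ := h1
  have hScard : Multiset.card S = s - 1 := by
    by_contra h
    have hle : s ≤ Multiset.card S := by omega
    obtain ⟨T, hT1, hT2, hT3⟩ := hs_mem S hle
    exact (hST T hT1) hT2 hT3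
  have hST' : ¬ ∃ T ≤ S, Multiset.card T = p ∧ T.sum = 0 := by
    rintro ⟨T, hT1, hT2, hT3⟩
    exact (hST T hT1) hT2 hT3
  obtain ⟨B, hB⟩ := propD S (by rw [hScard, hEGZdef]) hST'
  -- card computation
  have hBcard : (p - 1) * B.card = s - 1 := by
    rw [hB] at hScard
    simpa using hScard
  -- B satisfies the slice-rank hypothesis
  have hslice : ∀ v : Fin p → (Fin n → ZMod p), (∀ i, v i ∈ B) → (∑ i, v i) = 0 →
      ∀ i j, v i = v j := by
    intro v hv hsum i j
    by_contra hne'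
    set T : Multiset (Fin n → ZMod p) := Multiset.map v Finset.univ.val with hT
    have hcard : Multiset.card T = p := by simp [hT]
    have hsum' : T.sum = 0 := hsum
    have hle : T ≤ S := by
      rw [hB, Multiset.le_iff_count]
      intro a
      rw [Multiset.count_nsmul]
      by_cases ha : a ∈ B
      · have h1 : Multiset.count a B.val = 1 :=
          Multiset.count_eq_one_of_mem B.nodup ha
        rw [h1, mul_one]
        have hltp : Multiset.count a T ≤ p := by
          have := Multiset.count_le_card a T; omega
        rcases eq_or_lt_of_le hltp with heq | hlt
        · exfalso
          have heq' : Multiset.count a T = Multiset.card T := by omega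
          have hall := Multiset.count_eq_card.mp heq'
          have hi : v i ∈ T := Multiset.mem_map_of_mem v (Finset.mem_univ i)
          have hj : v j ∈ T := Multiset.mem_map_of_mem v (Finset.mem_univ j)
          exact hne' ((hall _ hi).symm.trans (hall _ hj))
        · omega
      · have h0 : Multiset.count a T = 0 := by
          rw [Multiset.count_eq_zero]
          intro hmemT
          obtain ⟨k, _, rfl⟩ := Multiset.mem_map.mp hmemT
          exact ha (hv k)
        simp [h0]
    exact hST' ⟨T, hle, hcard, hsum'⟩
  have hBle : B.card ≤ p * C := sliceRank B hslice
  have h2 : (p - 1) * B.card ≤ p * (p - 1) * C := by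
    calc (p - 1) * B.card ≤ (p - 1) * (p * C) := Nat.mul_le_mul_left _ hBle
      _ = p * (p - 1) * C := by ring
  rw [hBcard] at h2
  have h3 : p * (p - 1) * C + 1 ≤ s - 1 := Nat.le_sub_one_of_lt hcon
  omega
end

section
/- Let G be a finite abelian group and H ≤ G a subgroup with exp(G) = exp(H)·exp(G/H). Then s(G) ≤ exp(G/H)·(s(H) - 1) + s(G/H). -/
open Multiset AddMonoid

namespace Multiset

variable {α β : Type*}

theorem exists_le_map_eq_of_le_map {f : α → β} {s : Multiset α} {t : Multiset β}
    (h : t ≤ s.map f) : ∃ u ≤ s, u.map f = t := by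
  classical
  induction t using Multiset.induction_on generalizing s with
  | empty => exact ⟨0, zero_le s, rfl⟩
  | cons b t ih =>
    obtain ⟨a, ha, rfl⟩ := mem_map.1 (mem_of_le h (mem_cons_self b t))
    have ht : t ≤ (s.erase a).map f := by
      simpa [map_erase_of_mem _ _ ha] using erase_le_erase (f a) h
    obtain ⟨u, hu, rfl⟩ := ih ht
    exact ⟨a ::ₘ u, (cons_le_cons a hu).trans_eq (cons_erase ha), map_cons f a u⟩

theorem join_le_join {s t : Multiset (Multiset α)} (h : s ≤ t) : s.join ≤ t.join := by
  obtain ⟨u, rfl⟩ := le_iff_exists_add.1 h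
  exact join_add s u ▸ le_self_add

end Multiset

def IsEGZBound (A : Type*) [AddCommMonoid A] (ℓ : ℕ) : Prop :=
  ∀ S : Multiset A, ℓ ≤ card S → ∃ T ≤ S, card T = exponent A ∧ T.sum = 0

section IsEGZBound

variable {A : Type*} [AddCommMonoid A]

theorem EGZ_le_of_isEGZBound {ℓ : ℕ} (h : IsEGZBound A ℓ) : EGZ A ≤ ℓ :=
  Nat.sInf_le h

theorem isEGZBound_card_mul_exponent_sub_one_add_one [Fintype A] :
    IsEGZBound A (Fintype.card A * (exponent A - 1) + 1) := by
  classical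
  intro S hS
  obtain ⟨a, ha⟩ : ∃ a, exponent A ≤ S.count a := by
    by_contra! hcount
    have : card S ≤ Fintype.card A * (exponent A - 1) :=
      calc card S = ∑ a ∈ S.toFinset, S.count a := (toFinset_sum_count_eq S).symm
        _ ≤ ∑ _a ∈ S.toFinset, (exponent A - 1) :=
          Finset.sum_le_sum fun a _ => Nat.le_sub_one_of_lt (hcount a)
        _ ≤ Fintype.card A * (exponent A - 1) := by
          rw [Finset.sum_const, smul_eq_mul]
          exact Nat.mul_le_mul_right _ (Finset.card_le_univ _)
    omega
  exact ⟨replicate (exponent A) a, le_count_iff_replicate_le.1 ha, card_replicate _ _,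
    by rw [sum_replicate, exponent_nsmul_eq_zero]⟩

theorem isEGZBound_EGZ [Finite A] : IsEGZBound A (EGZ A) := by
  cases nonempty_fintype A
  exact Nat.sInf_mem (s := {ℓ | IsEGZBound A ℓ})
    ⟨_, isEGZBound_card_mul_exponent_sub_one_add_one⟩

end IsEGZBound

/-- The hypothesis on `card S` is `ℓ + exponent Q * (k - 1) ≤ card S` without truncated
subtraction. -/
theorem IsEGZBound.exists_blocks_map_sum_eq_zero {G Q : Type*} [AddCommMonoid G]
    [AddCommMonoid Q] {ℓ : ℕ} (hℓ : IsEGZBound Q ℓ) (φ : G →+ Q) (k : ℕ) (S : Multiset G)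
    (hS : exponent Q * k + ℓ ≤ card S + exponent Q) :
    ∃ B : Multiset (Multiset G), card B = k ∧ B.join ≤ S ∧
      ∀ b ∈ B, card b = exponent Q ∧ φ b.sum = 0 := by
  classical
  induction k generalizing S with
  | zero => exact ⟨0, rfl, by simp, by simp⟩
  | succ k ih =>
    rw [Nat.mul_succ] at hS
    obtain ⟨T, hTS, hTcard, hTsum⟩ := hℓ (S.map φ) (by rw [card_map]; omega)
    obtain ⟨b, hbS, rfl⟩ := exists_le_map_eq_of_le_map hTS
    rw [card_map] at hTcard
    obtain ⟨B, hBcard, hBS, hB⟩ := ih (S - b) (by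
      rw [card_sub hbS, hTcard]; have := card_le_card hbS; omega)
    refine ⟨b ::ₘ B, by rw [card_cons, hBcard], ?_, ?_⟩
    · rw [join_cons]
      exact (le_tsub_iff_left hbS).1 hBS
    · rintro c hc
      rcases mem_cons.1 hc with rfl | hc
      · exact ⟨hTcard, by rwa [map_multiset_sum]⟩
      · exact hB c hc

theorem IsEGZBound.exists_le_card_join_sum_join_eq_zero {G : Type*} [AddCommGroup G]
    {H : AddSubgroup G} {ℓ n : ℕ} (hℓ : IsEGZBound H ℓ) (B : Multiset (Multiset G))
    (hB : ℓ ≤ card B) (hblock : ∀ b ∈ B, card b = n ∧ b.sum ∈ H) :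
    ∃ C ≤ B, card C.join = exponent H * n ∧ C.join.sum = 0 := by
  let blockSum : {b // b ∈ B} → H := fun b => ⟨b.1.sum, (hblock b.1 b.2).2⟩
  obtain ⟨T, hTB, hTcard, hTsum⟩ := hℓ (B.attach.map blockSum) (by rwa [card_map, card_attach])
  obtain ⟨C, hCB, rfl⟩ := exists_le_map_eq_of_le_map hTB
  refine ⟨C.map Subtype.val, by simpa using map_le_map (f := Subtype.val) hCB, ?_, ?_⟩
  · have hcard : ∀ b ∈ C, (card ∘ Subtype.val) b = n := fun b _ => (hblock b.1 b.2).1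
    rw [card_join, map_map, map_congr rfl hcard, map_const', sum_replicate, ← hTcard,
      card_map, smul_eq_mul]
  · rw [sum_join, map_map]
    simpa [blockSum] using congrArg ((↑) : H → G) hTsum

/-- If `H ≤ G` is a subgroup of a finite abelian group with `exp(G) = exp(H)·exp(G/H)`, then
`s(G) ≤ exp(G/H)·(s(H) - 1) + s(G/H)`. -/
theorem EGZ_subgroup_bound (G : Type*) [AddCommGroup G] [Fintype G] (H : AddSubgroup G)
    (hexp : AddMonoid.exponent G = AddMonoid.exponent H * AddMonoid.exponent (G ⧸ H)) :
    EGZ G ≤ AddMonoid.exponent (G ⧸ H) * (EGZ H - 1) + EGZ (G ⧸ H) := by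
  set n := exponent (G ⧸ H)
  refine EGZ_le_of_isEGZBound fun S hS => ?_
  have hk : n * EGZ H + EGZ (G ⧸ H) ≤ card S + n := by
    have : n * EGZ H ≤ n * (EGZ H - 1) + n := by
      rw [← Nat.mul_succ]; exact Nat.mul_le_mul_left _ (by omega)
    omega
  obtain ⟨B, hBcard, hBS, hB⟩ :=
    isEGZBound_EGZ.exists_blocks_map_sum_eq_zero (QuotientAddGroup.mk' H) _ S hk
  obtain ⟨C, hCB, hCcard, hCsum⟩ :=
    isEGZBound_EGZ.exists_le_card_join_sum_join_eq_zero B hBcard.ge fun b hb =>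
      ⟨(hB b hb).1, (QuotientAddGroup.eq_zero_iff _).1 (hB b hb).2⟩
  exact ⟨C.join, (join_le_join hCB).trans hBS, hCcard.trans hexp.symm, hCsum⟩
end

section
/- For every integer k ≥ 2 and every n ≥ 1, the Erdős–Ginzburg–Ziv constant satisfies (k-1)·2^n + 1 ≤ s((ℤ/kℤ)^n) ≤ (k-1)·k^n + 1. -/
lemma exp_pi (k n : ℕ) (hk : 2 ≤ k) (hn : 1 ≤ n) :
    AddMonoid.exponent (Fin n → ZMod k) = k := by
  haveI : NeZero k := ⟨by omega⟩
  apply Nat.dvd_antisymm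
  · apply AddMonoid.exponent_dvd_of_forall_nsmul_eq_zero
    intro g
    funext i
    simp [nsmul_eq_mul, ZMod.natCast_self]
  · have h := AddMonoid.exponent_nsmul_eq_zero (fun _ : Fin n => (1 : ZMod k))
    have h2 := congrFun h ⟨0, hn⟩
    simpa [nsmul_eq_mul, ZMod.natCast_eq_zero_iff] using h2

lemma upper_mem (k n : ℕ) (hk : 2 ≤ k) (hn : 1 ≤ n) :
    ∀ S : Multiset (Fin n → ZMod k), (k - 1) * k ^ n + 1 ≤ Multiset.card S →
      ∃ T ≤ S, Multiset.card T = AddMonoid.exponent (Fin n → ZMod k) ∧ T.sum = 0 := by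
  haveI : NeZero k := ⟨by omega⟩
  intro S hS
  have hex : ∃ a : Fin n → ZMod k, k ≤ S.count a := by
    by_contra hcon
    push_neg at hcon
    have hle : Multiset.card S ≤ (k - 1) * k ^ n := by
      calc Multiset.card S = ∑ a ∈ S.toFinset, S.count a :=
            (Multiset.toFinset_sum_count_eq S).symm
        _ ≤ ∑ a ∈ (Finset.univ : Finset (Fin n → ZMod k)), S.count a := by
            apply Finset.sum_le_sum_of_subset (Finset.subset_univ _)
        _ ≤ ∑ _a ∈ (Finset.univ : Finset (Fin n → ZMod k)), (k - 1) := by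
            apply Finset.sum_le_sum
            intro a _
            have := hcon a
            omega
        _ = (k - 1) * k ^ n := by
            rw [Finset.sum_const, smul_eq_mul, Finset.card_univ, Fintype.card_fun]
            rw [ZMod.card, Fintype.card_fin, mul_comm]
    omega
  obtain ⟨a, ha⟩ := hex
  refine ⟨Multiset.replicate k a, Multiset.le_count_iff_replicate_le.mp ha, ?_, ?_⟩
  · rw [Multiset.card_replicate, exp_pi k n hk hn]
  · rw [Multiset.sum_replicate]
    funext i
    simp [nsmul_eq_mul, ZMod.natCast_self]

lemma lower_block (k n : ℕ) (hk : 2 ≤ k) (hn : 1 ≤ n)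
    (hexp : AddMonoid.exponent (Fin n → ZMod k) = k)
    (ℓ : ℕ)
    (hℓ : ∀ S : Multiset (Fin n → ZMod k), ℓ ≤ Multiset.card S →
      ∃ T ≤ S, Multiset.card T = AddMonoid.exponent (Fin n → ZMod k) ∧ T.sum = 0) :
    (k - 1) * 2 ^ n + 1 ≤ ℓ := by
  haveI : Fact (1 < k) := ⟨hk⟩
  by_contra hcon
  push_neg at hcon
  set f : (Fin n → Bool) → (Fin n → ZMod k) := fun b i => if b i then 1 else 0 with hf
  have hfinj : Function.Injective f := by
    intro b b' hbb
    funext i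
    have h : (if b i then (1:ZMod k) else 0) = (if b' i then 1 else 0) := congrFun hbb i
    cases hb : b i <;> cases hb' : b' i <;> rw [hb, hb'] at h <;> simp_all
  set M0 : Multiset (Fin n → ZMod k) := (Finset.univ : Finset (Fin n → Bool)).val.map f with hM0
  set S : Multiset (Fin n → ZMod k) := (k - 1) • M0 with hS
  have hcardS : Multiset.card S = (k - 1) * 2 ^ n := by
    rw [hS, Multiset.card_nsmul, hM0, Multiset.card_map, ← Finset.card_def, Finset.card_univ]
    rw [Fintype.card_fun, Fintype.card_bool, Fintype.card_fin]
  obtain ⟨T, hTS, hTcard, hTsum⟩ := hℓ S (by omega)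
  rw [hexp] at hTcard
  -- every element of T has 0/1 coordinates
  have hmem : ∀ t ∈ T, ∀ i, t i = 0 ∨ t i = 1 := by
    intro t ht i
    have htS : t ∈ S := Multiset.mem_of_le hTS ht
    rw [hS, Multiset.mem_nsmul] at htS
    obtain ⟨b, _, rfl⟩ := Multiset.mem_map.mp htS.2
    by_cases hb : b i <;> simp [hf, hb]
  -- per coordinate, the count of ones is 0 or k
  have hcoord : ∀ i : Fin n, Multiset.count 1 (T.map (· i)) = 0 ∨
      Multiset.count 1 (T.map (· i)) = k := by
    intro i
    set M : Multiset (ZMod k) := T.map (· i) with hM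
    have hMsum : M.sum = 0 := by
      have := map_multiset_sum (Pi.evalAddMonoidHom (fun _ : Fin n => ZMod k) i) T
      rw [hTsum] at this
      simpa [hM] using this.symm
    have hsplit : M = M.filter (· = 1) + M.filter (fun x => ¬ x = 1) :=
      (Multiset.filter_add_not _ M).symm
    have h0 : (M.filter (fun x => ¬ x = 1)).sum = 0 := by
      apply Multiset.sum_eq_zero
      intro x hx
      rw [Multiset.mem_filter] at hx
      obtain ⟨hx1, hx2⟩ := hx
      rw [hM, Multiset.mem_map] at hx1
      obtain ⟨t, ht, rfl⟩ := hx1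
      rcases hmem t ht i with h | h
      · exact h
      · exact absurd h hx2
    have h1 : (M.filter (· = 1)).sum = (Multiset.count 1 M : ZMod k) := by
      rw [Multiset.filter_eq', Multiset.sum_replicate, nsmul_eq_mul, mul_one]
    have : (Multiset.count 1 M : ZMod k) = 0 := by
      rw [hsplit, Multiset.sum_add, h0, add_zero] at hMsum
      rw [← h1]; exact hMsum
    rw [ZMod.natCast_eq_zero_iff] at this
    have hle : Multiset.count 1 M ≤ k := by
      calc Multiset.count 1 M ≤ Multiset.card M := Multiset.count_le_card _ _
        _ = k := by rw [hM, Multiset.card_map, hTcard]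
    rcases this with ⟨c, hc⟩
    rcases c with _ | c
    · left; omega
    · right
      have h2 : k ≤ Multiset.count 1 M :=
        hc ▸ Nat.le_mul_of_pos_right k (Nat.succ_pos c)
      omega
  -- all elements of T are equal
  have hTne : T ≠ 0 := by
    intro h
    rw [h] at hTcard
    simp at hTcard
    omega
  obtain ⟨a, ha⟩ := Multiset.exists_mem_of_ne_zero hTne
  have hall : ∀ t ∈ T, t = a := by
    intro t ht
    funext i
    by_contra hne
    have h01 : (1 : ZMod k) ∈ T.map (fun x => x i) ∧ (0 : ZMod k) ∈ T.map (fun x => x i) := by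
      rcases hmem t ht i with h | h <;> rcases hmem a ha i with h' | h'
      · exact absurd (h.trans h'.symm) hne
      · exact ⟨Multiset.mem_map.mpr ⟨a, ha, h'⟩, Multiset.mem_map.mpr ⟨t, ht, h⟩⟩
      · exact ⟨Multiset.mem_map.mpr ⟨t, ht, h⟩, Multiset.mem_map.mpr ⟨a, ha, h'⟩⟩
      · exact absurd (h.trans h'.symm) hne
    obtain ⟨hone, hzero⟩ := h01
    have hpos : 1 ≤ Multiset.count 1 (T.map (fun x => x i)) :=
      Multiset.one_le_count_iff_mem.mpr hone
    have hlt : Multiset.count 1 (T.map (fun x => x i)) ≤ k - 1 := by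
      have heq := Multiset.count_erase_of_ne (a := (1 : ZMod k)) (b := (0 : ZMod k))
        one_ne_zero (T.map (fun x => x i))
      calc Multiset.count 1 (T.map (fun x => x i))
          = Multiset.count 1 ((T.map (fun x => x i)).erase 0) := heq.symm
        _ ≤ Multiset.card ((T.map (fun x => x i)).erase 0) := Multiset.count_le_card _ _
        _ = k - 1 := by
            rw [Multiset.card_erase_of_mem hzero, Multiset.card_map, hTcard]
            rfl
    rcases hcoord i with h | h
    · rw [h] at hpos
      exact Nat.not_succ_le_zero 0 hpos
    · rw [h] at hlt
      have hkpos : 0 < k := lt_of_lt_of_le (by norm_num) hk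
      exact absurd hlt (Nat.not_le.mpr (Nat.sub_lt hkpos one_pos))
  have hrep : T = Multiset.replicate k a :=
    Multiset.eq_replicate.mpr ⟨hTcard, hall⟩
  have hcount : k ≤ Multiset.count a S := by
    rw [Multiset.le_count_iff_replicate_le, ← hrep]
    exact hTS
  have : Multiset.count a S ≤ k - 1 := by
    rw [hS, Multiset.count_nsmul]
    have hnd : M0.Nodup := Multiset.Nodup.map hfinj (Finset.univ.nodup)
    have := (Multiset.nodup_iff_count_le_one.mp hnd) a
    calc (k-1) * Multiset.count a M0 ≤ (k-1) * 1 := by exact Nat.mul_le_mul_left _ this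
      _ = k - 1 := by ring
  omega

/-- Harborth's bounds: `(k-1)·2^n + 1 ≤ s((ℤ/kℤ)^n) ≤ (k-1)·k^n + 1`. -/
theorem harborth_bounds (k n : ℕ) (hk : 2 ≤ k) (hn : 1 ≤ n) :
    (k - 1) * 2 ^ n + 1 ≤ EGZ (Fin n → ZMod k) ∧
    EGZ (Fin n → ZMod k) ≤ (k - 1) * k ^ n + 1 := by
  have hexp := exp_pi k n hk hn
  have hmem : ((k - 1) * k ^ n + 1) ∈ {ℓ | ∀ S : Multiset (Fin n → ZMod k),
      ℓ ≤ Multiset.card S → ∃ T ≤ S,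
        Multiset.card T = AddMonoid.exponent (Fin n → ZMod k) ∧ T.sum = 0} :=
    upper_mem k n hk hn
  constructor
  · exact le_csInf ⟨_, hmem⟩ fun ℓ hℓ => lower_block k n hk hn hexp ℓ hℓ
  · exact Nat.sInf_le hmem
end

section
/- For k = 2^a with a ≥ 1 and any n ≥ 1, s((ℤ/kℤ)^n) = (k-1)·2^n + 1. -/
/-!
Upper bound, by induction on `a`: among `(2m-1)·2ⁿ+1` vectors over `ℤ/2m`, pigeonholing on the
parity vector extracts `(m-1)·2ⁿ+1` disjoint pairs of equal parity. Each pair sums to twice a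
vector over `ℤ/m`; `m` of these halves summing to zero in `ℤ/m` give `2m` of the original vectors
summing to zero in `ℤ/2m`.

Lower bound: take `k-1` copies of every `0/1` vector. In a zero-sum subsequence of length `k` each
coordinate is a sum of `k` zeros and ones divisible by `k`, hence constant, so the subsequence
would be `k` copies of a single vector.
-/

namespace Multiset

variable {α β : Type*}

theorem exists_le_map_eq_of_le_map_s9 {f : α → β} {S : Multiset α} {T : Multiset β}
    (h : T ≤ S.map f) : ∃ Q ≤ S, Q.map f = T := by
  induction S using Quotient.inductionOn
  induction T using Quotient.inductionOn
  obtain ⟨l, hperm, hsub⟩ := coe_le.mp h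
  obtain ⟨l', hl', rfl⟩ := List.sublist_map_iff.mp hsub
  exact ⟨l', hl'.subperm |> coe_le.mpr, coe_eq_coe.mpr hperm⟩

theorem exists_pair_le_of_card_lt [Fintype β] (f : α → β) {S : Multiset α}
    (hS : Fintype.card β < card S) : ∃ x y, {x, y} ≤ S ∧ f x = f y := by
  classical
  have hnd : ¬ (S.map f).Nodup := fun h => by
    have := (S.map f).toFinset.card_le_univ
    rw [toFinset_card_of_nodup h, card_map] at this
    omega
  obtain ⟨b, hb⟩ := not_forall_not.mp (mt nodup_iff_le.mpr hnd)
  obtain ⟨Q, hQS, hQ⟩ := exists_le_map_eq_of_le_map_s9 hb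
  have hQb : ∀ z ∈ Q, f z = b := fun z hz => by
    simpa [hQ] using mem_map_of_mem f hz
  obtain ⟨x, y, rfl⟩ := card_eq_two.mp (by simpa using congrArg card hQ)
  exact ⟨x, y, hQS, by rw [hQb x (by simp), hQb y (by simp)]⟩

theorem exists_pairs_le [Fintype β] (f : α → β) (j : ℕ) {S : Multiset α}
    (hS : 2 * j + Fintype.card β ≤ card S + 1) :
    ∃ P : Multiset (α × α), card P = j ∧ P.map Prod.fst + P.map Prod.snd ≤ S ∧
      ∀ p ∈ P, f p.1 = f p.2 := by
  classical
  induction j generalizing S with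
  | zero => exact ⟨0, rfl, zero_le _, by simp⟩
  | succ j ih =>
    obtain ⟨x, y, hxy, hfxy⟩ := exists_pair_le_of_card_lt f (S := S) (by omega)
    obtain ⟨P, hPcard, hPS, hPf⟩ := ih (S := S - {x, y}) (by
      rw [card_sub hxy]
      simp only [insert_eq_cons, card_cons, card_singleton]
      omega)
    refine ⟨(x, y) ::ₘ P, by simp [hPcard], ?_, by simpa [hfxy] using hPf⟩
    calc ((x, y) ::ₘ P).map Prod.fst + ((x, y) ::ₘ P).map Prod.snd
        = {x, y} + (P.map Prod.fst + P.map Prod.snd) := by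
          simp only [map_cons, insert_eq_cons, cons_add, add_cons, singleton_add, cons_swap]
      _ ≤ {x, y} + (S - {x, y}) := add_le_add le_rfl hPS
      _ = S := add_tsub_cancel_of_le hxy

theorem forall_eq_of_le_one_of_card_dvd_sum {s : Multiset ℕ} (hs : ∀ a ∈ s, a ≤ 1)
    (hdvd : card s ∣ s.sum) : ∀ a ∈ s, ∀ b ∈ s, a = b := by
  classical
  have hle : s.sum ≤ card s := by simpa using sum_le_card_nsmul s 1 hs
  rcases Nat.eq_zero_or_pos s.sum with h0 | hpos
  · intro a ha b hb
    rw [sum_eq_zero_iff.mp h0 a ha, sum_eq_zero_iff.mp h0 b hb]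
  · have hone : ∀ a ∈ s, a = 1 := fun a ha => by
      have hrest := sum_le_card_nsmul (s.erase a) 1 fun b hb => hs b (mem_of_mem_erase hb)
      have hcard : card (s.erase a) = card s - 1 := card_erase_of_mem ha
      have hsum := sum_erase ha
      have := Nat.le_of_dvd hpos hdvd
      have := hs a ha
      simp only [smul_eq_mul, mul_one] at hrest
      omega
    intro a ha b hb
    rw [hone a ha, hone b hb]

end Multiset

open Multiset

def HasZeroSumOfCard {A : Type*} [AddCommMonoid A] (S : Multiset A) (m : ℕ) : Prop :=
  ∃ T ≤ S, card T = m ∧ T.sum = 0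

theorem hasZeroSumOfCard_two_mul_of_pairing {G H Q : Type*} [AddCommMonoid G] [AddCommMonoid H]
    [Fintype Q] (π : G → Q) (φ : H →+ G) (hφ : ∀ x y, π x = π y → ∃ h, φ h = x + y) {L m : ℕ}
    (hH : ∀ U : Multiset H, L ≤ card U → HasZeroSumOfCard U m) {S : Multiset G}
    (hS : 2 * L + Fintype.card Q ≤ card S + 1) : HasZeroSumOfCard S (2 * m) := by
  choose! ψ hψ using hφ
  obtain ⟨P, hPcard, hPS, hPπ⟩ := exists_pairs_le π L hS
  obtain ⟨U, hUP, hUcard, hUsum⟩ := hH (P.map fun p => ψ p.1 p.2) (by simp [hPcard])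
  obtain ⟨R, hRP, rfl⟩ := exists_le_map_eq_of_le_map_s9 hUP
  refine ⟨R.map Prod.fst + R.map Prod.snd, ?_, by
    rw [← hUcard, card_add, card_map, card_map, card_map, two_mul], ?_⟩
  · exact le_trans (add_le_add (map_le_map hRP) (map_le_map hRP)) hPS
  · calc (R.map Prod.fst + R.map Prod.snd).sum
        = (R.map fun p => p.1 + p.2).sum := by rw [sum_add, sum_map_add]
      _ = ((R.map fun p => ψ p.1 p.2).map φ).sum := by
          rw [map_map]
          exact congrArg sum (map_congr rfl fun p hp => (hψ _ _ (hPπ p (mem_of_le hRP hp))).symm)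
      _ = 0 := by rw [← map_multiset_sum, hUsum, _root_.map_zero]

namespace ZMod

def doubleHom (m : ℕ) : ZMod m →+ ZMod (2 * m) :=
  ZMod.lift m ⟨(2 : ℤ) • Int.castAddHom (ZMod (2 * m)), by
    simp only [AddMonoidHom.coe_smul, Pi.smul_apply, Int.coe_castAddHom, Int.cast_natCast,
      zsmul_eq_mul]
    exact_mod_cast ZMod.natCast_self (2 * m)⟩

theorem exists_doubleHom_add_of_castHom_eq {m : ℕ} {x y : ZMod (2 * m)}
    (h : castHom (dvd_mul_right 2 m) (ZMod 2) x = castHom (dvd_mul_right 2 m) (ZMod 2) y) :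
    ∃ c, doubleHom m c = x + y := by
  obtain ⟨t, ht⟩ := intCast_surjective (x + y)
  have h2t : ((2 : ℕ) : ℤ) ∣ t := (intCast_zmod_eq_zero_iff_dvd t 2).mp <| by
    rw [← map_intCast (castHom (dvd_mul_right 2 m) (ZMod 2)), ht, _root_.map_add, h,
      CharTwo.add_self_eq_zero]
  obtain ⟨s, rfl⟩ := h2t
  rw [← ht]
  exact ⟨s, by simp [doubleHom, lift_coe]⟩

end ZMod

theorem hasZeroSumOfCard_zmod_two_mul {n m : ℕ} (hm : 1 ≤ m)
    (hH : ∀ U : Multiset (Fin n → ZMod m), (m - 1) * 2 ^ n + 1 ≤ card U → HasZeroSumOfCard U m)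
    {S : Multiset (Fin n → ZMod (2 * m))} (hS : (2 * m - 1) * 2 ^ n + 1 ≤ card S) :
    HasZeroSumOfCard S (2 * m) := by
  refine hasZeroSumOfCard_two_mul_of_pairing
    (fun x => ZMod.castHom (dvd_mul_right 2 m) (ZMod 2) ∘ x) ((ZMod.doubleHom m).compLeft (Fin n))
    (fun x y hxy => ?_) hH ?_
  · choose c hc using fun i => ZMod.exists_doubleHom_add_of_castHom_eq (congrFun hxy i)
    exact ⟨c, funext hc⟩
  · have hsplit : (2 * m - 1) * 2 ^ n = 2 * ((m - 1) * 2 ^ n) + 2 ^ n := by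
      obtain ⟨m, rfl⟩ := Nat.exists_eq_add_of_le' hm
      rw [Nat.add_sub_cancel, show 2 * (m + 1) - 1 = 2 * m + 1 by omega]
      ring
    simp only [Fintype.card_fun, ZMod.card, Fintype.card_fin]
    omega

theorem hasZeroSumOfCard_of_eq_two_pow {n a k : ℕ} (hk : k = 2 ^ a)
    {S : Multiset (Fin n → ZMod k)} (hS : (k - 1) * 2 ^ n + 1 ≤ card S) : HasZeroSumOfCard S k := by
  induction a generalizing k S with
  | zero =>
    rw [pow_zero] at hk
    subst hk
    obtain ⟨x, hx⟩ := card_pos_iff_exists_mem.mp (by omega : 0 < card S)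
    exact ⟨{x}, singleton_le.mpr hx, card_singleton x, Subsingleton.elim _ _⟩
  | succ a ih =>
    rw [pow_succ'] at hk
    subst hk
    exact hasZeroSumOfCard_zmod_two_mul Nat.one_le_two_pow (fun U hU => ih rfl hU) hS

theorem eq_of_mem_of_val_le_one_of_sum_eq_zero {n k : ℕ} [NeZero k]
    {T : Multiset (Fin n → ZMod k)} (hT : ∀ x ∈ T, ∀ i, (x i).val ≤ 1) (hcard : card T = k)
    (hsum : T.sum = 0) {x y : Fin n → ZMod k} (hx : x ∈ T) (hy : y ∈ T) : x = y := by
  funext i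
  refine ZMod.val_injective k <|
    forall_eq_of_le_one_of_card_dvd_sum (s := T.map fun x => (x i).val) ?_ ?_
      _ (mem_map_of_mem _ hx) _ (mem_map_of_mem _ hy)
  · simpa using fun x hx => hT x hx i
  · rw [card_map, hcard, ← ZMod.natCast_eq_zero_iff, Nat.cast_multiset_sum, map_map]
    simp [← Pi.multiset_sum_apply, hsum]

theorem exists_card_eq_not_hasZeroSumOfCard (n : ℕ) {k : ℕ} (hk : 2 ≤ k) :
    ∃ S : Multiset (Fin n → ZMod k), card S = (k - 1) * 2 ^ n ∧ ¬ HasZeroSumOfCard S k := by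
  classical
  have : Fact (1 < k) := ⟨hk⟩
  let B : Finset (Fin n → ZMod k) := Fintype.piFinset fun _ => {0, 1}
  refine ⟨(k - 1) • B.val, by simp [B], ?_⟩
  rintro ⟨T, hTS, hTcard, hTsum⟩
  have hTB : ∀ x ∈ T, ∀ i, (x i).val ≤ 1 := fun x hx i => by
    have := Fintype.mem_piFinset.mp (mem_of_mem_nsmul (mem_of_le hTS hx)) i
    simp only [Finset.mem_insert, Finset.mem_singleton] at this
    rcases this with h | h <;> simp [h, ZMod.val_one]
  obtain ⟨w, hw⟩ := card_pos_iff_exists_mem.mp (by omega : 0 < card T)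
  have hTw : T = replicate k w := eq_replicate.mpr
    ⟨hTcard, fun x hx => eq_of_mem_of_val_le_one_of_sum_eq_zero hTB hTcard hTsum hx hw⟩
  have hcount := count_le_of_le w hTS
  rw [hTw, count_replicate_self, count_nsmul] at hcount
  have := Nat.mul_le_mul_left (k - 1) (nodup_iff_count_le_one.mp B.nodup w)
  omega

theorem AddMonoid.exponent_pi_const {ι M : Type*} [Fintype ι] [Nonempty ι] [AddMonoid M] :
    AddMonoid.exponent (ι → M) = AddMonoid.exponent M := by
  rw [AddMonoid.exponent_pi]
  exact Nat.dvd_antisymm (Finset.lcm_dvd fun _ _ => dvd_rfl)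
    (Finset.dvd_lcm (Finset.mem_univ (Classical.arbitrary ι)))

theorem EGZ_eq_add_one {A : Type*} [AddCommMonoid A] {ℓ : ℕ}
    (hgood : ∀ S : Multiset A, ℓ + 1 ≤ card S → HasZeroSumOfCard S (AddMonoid.exponent A))
    (hbad : ∃ S : Multiset A, card S = ℓ ∧ ¬ HasZeroSumOfCard S (AddMonoid.exponent A)) :
    EGZ A = ℓ + 1 := by
  refine le_antisymm (Nat.sInf_le hgood) (le_csInf ⟨_, hgood⟩ fun l hl => ?_)
  obtain ⟨S, hScard, hS⟩ := hbad
  by_contra! hlt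
  exact hS (hl S (by omega))

/-- Harborth's theorem: for `k = 2^a` with `a ≥ 1` and any `n ≥ 1`,
`s((ℤ/kℤ)^n) = (k-1)·2^n + 1`. -/
theorem harborth_two_power (a n k : ℕ) (ha : 1 ≤ a) (hn : 1 ≤ n) (hk : k = 2 ^ a) :
    EGZ (Fin n → ZMod k) = (k - 1) * 2 ^ n + 1 := by
  have : Nonempty (Fin n) := ⟨⟨0, hn⟩⟩
  have hexp : AddMonoid.exponent (Fin n → ZMod k) = k := by
    rw [AddMonoid.exponent_pi_const, ZMod.exponent]
  have hk2 : 2 ≤ k := hk ▸ Nat.le_self_pow (by omega) 2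
  apply EGZ_eq_add_one
  · rw [hexp]
    exact fun S hS => hasZeroSumOfCard_of_eq_two_pow hk hS
  · rw [hexp]
    exact exists_card_eq_not_hasZeroSumOfCard n hk2
end

section
/- Let q = p^α ≥ 3 be an odd prime power and n ≥ 1. Assume that for every β with 1 ≤ β ≤ α the group (ℤ/pℤ)^n satisfies s((ℤ/pℤ)^n) ≤ p(p-1)·C(2n,n) + 1, and use the subgroup inequality s(G) ≤ exp(G/H)(s(H)-1) + s(G/H) for G = (ℤ/p^βℤ)^n, H = (ℤ/pℤ)^n. Then s((ℤ/qℤ)^n) ≤ p(q-1)·C(2n,n) + 1. -/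
/-- For an odd prime power `q = p^α ≥ 3`: assuming the bound for `(ℤ/pℤ)^n` and the subgroup
inequality for `G = (ℤ/p^βℤ)^n`, `H = (ℤ/pℤ)^n` (with `G/H ≅ (ℤ/p^{β-1}ℤ)^n`), we get
`s((ℤ/qℤ)^n) ≤ p(q-1)·C(2n,n) + 1`. -/
theorem EGZ_prime_power (p α q n : ℕ) (hp : p.Prime) (hq : q = p ^ α) (hodd : Odd q)
    (hq3 : 3 ≤ q) (hn : 1 ≤ n)
    (hbase : EGZ (Fin n → ZMod p) ≤ p * (p - 1) * Nat.choose (2 * n) n + 1)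
    (hsub : ∀ β : ℕ, 1 ≤ β → β ≤ α →
      EGZ (Fin n → ZMod (p ^ β)) ≤
        p ^ (β - 1) * (EGZ (Fin n → ZMod p) - 1) + EGZ (Fin n → ZMod (p ^ (β - 1)))) :
    EGZ (Fin n → ZMod q) ≤ p * (q - 1) * Nat.choose (2 * n) n + 1 := by
  subst hq
  set C := Nat.choose (2 * n) n with hC
  have hp2 : 2 ≤ p := hp.two_le
  have hα : 1 ≤ α := by
    rcases Nat.eq_zero_or_pos α with h | h
    · subst h; simp at hq3
    · exact h
  have hE1 : EGZ (Fin n → ZMod p) - 1 ≤ p * (p - 1) * C := by omega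
  have key : ∀ β, 1 ≤ β → β ≤ α →
      EGZ (Fin n → ZMod (p ^ β)) ≤ p * (p ^ β - 1) * C + 1 := by
    intro β
    induction β with
    | zero => intro h; omega
    | succ β ih =>
      intro h1 h2
      rcases Nat.eq_zero_or_pos β with h0 | hb
      · subst h0
        have e : p ^ (0 + 1) = p := by simp
        rw [e]
        exact hbase
      · have hs := hsub (β + 1) (by omega) h2
        simp only [Nat.add_sub_cancel] at hs
        have hih := ih hb (by omega)
        have hchain : EGZ (Fin n → ZMod (p ^ (β + 1))) ≤
            p ^ β * (p * (p - 1) * C) + (p * (p ^ β - 1) * C + 1) := by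
          calc EGZ (Fin n → ZMod (p ^ (β + 1)))
              ≤ p ^ β * (EGZ (Fin n → ZMod p) - 1) + EGZ (Fin n → ZMod (p ^ β)) := hs
            _ ≤ p ^ β * (p * (p - 1) * C) + (p * (p ^ β - 1) * C + 1) :=
                Nat.add_le_add (Nat.mul_le_mul_left _ hE1) hih
        refine hchain.trans ?_
        have hpb : 1 ≤ p ^ β := Nat.one_le_pow _ _ (by omega)
        obtain ⟨a, ha⟩ : ∃ a, p ^ β = a + 1 := ⟨p ^ β - 1, by omega⟩
        obtain ⟨b, hb'⟩ : ∃ b, p = b + 1 := ⟨p - 1, by omega⟩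
        have hpow : p ^ (β + 1) = p * p ^ β := by ring
        rw [hpow, ha, hb']
        have e1 : (b + 1) * (a + 1) - 1 = b * a + b + a := by
          have : (b + 1) * (a + 1) = b * a + b + a + 1 := by ring
          omega
        rw [e1]
        simp only [Nat.add_sub_cancel]
        nlinarith [sq_nonneg a, sq_nonneg b]
  exact key α hα le_rfl
end

section
/- Let k = p_1^{α_1}···p_r^{α_r} be odd with distinct primes p_i. Assume for each prime p dividing k that s((ℤ/p^βℤ)^n) ≤ p(p^β - 1)·C(2n,n) + 1 for all β ≥ 1. Then s((ℤ/kℤ)^n) ≤ (p_1···p_r)(k-1)·C(2n,n) + 1. -/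
/-!
If `exp A` and `exp B` are coprime, then `s(A × B) ≤ exp B · (s A - 1) + s B`. Given a sequence in
`A × B` of that length, project to `B` and peel off `s A` disjoint blocks of length `exp B`, each
summing to `0` in `B`. The `s A` block sums in `A` contain `exp A` terms summing to `0`. The union
of those blocks is a zero-sum subsequence of length `exp A · exp B = exp (A × B)`.

The Chinese remainder theorem splits `(ℤ/abℤ)ⁿ` for coprime `a, b` as `(ℤ/aℤ)ⁿ × (ℤ/bℤ)ⁿ`, so the
bound for `k` follows from the prime-power bounds by induction over coprime factorizations. The
radical is multiplicative, and the induction step needs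
`b · R_a (a - 1) + R_b (b - 1) ≤ R_a R_b (ab - 1)`, which holds since `ab - 1 = b(a - 1) + (b - 1)`.
-/

theorem Multiset.exists_le_map_eq_of_le_map_s11 {α β : Type*} {f : α → β} {S : Multiset α}
    {T : Multiset β} (h : T ≤ S.map f) : ∃ U ≤ S, U.map f = T := by
  induction S using Quot.inductionOn
  induction T using Quot.inductionOn
  obtain ⟨l, hl, hsub⟩ := h
  obtain ⟨l', hl', rfl⟩ := List.sublist_map_iff.1 hsub
  exact ⟨l', hl'.subperm, Quot.sound hl⟩

theorem Multiset.join_le_join_s11 {α : Type*} {L L' : Multiset (Multiset α)} (h : L' ≤ L) :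
    L'.join ≤ L.join := by
  obtain ⟨R, rfl⟩ := Multiset.le_iff_exists_add.1 h
  rw [Multiset.join_add]
  exact Multiset.le_add_right _ _

section EGZSet

variable {A B : Type*}

-- `EGZ A` is by definition `sInf (egzSet A)`.
def egzSet (A : Type*) [AddCommMonoid A] : Set ℕ :=
  {ℓ | ∀ S : Multiset A, ℓ ≤ Multiset.card S →
    ∃ T ≤ S, Multiset.card T = AddMonoid.exponent A ∧ T.sum = 0}

theorem egzSet_mono [AddCommMonoid A] {ℓ ℓ' : ℕ} (h : ℓ ∈ egzSet A) (hle : ℓ ≤ ℓ') :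
    ℓ' ∈ egzSet A :=
  fun S hS => h S (hle.trans hS)

theorem egzSet_nonempty [AddCommGroup A] [Finite A] : (egzSet A).Nonempty := by
  classical
  have := Fintype.ofFinite A
  set e := AddMonoid.exponent A
  refine ⟨Fintype.card A * (e - 1) + 1, fun S hS => ?_⟩
  obtain ⟨a, ha⟩ : ∃ a, e ≤ S.count a := by
    by_contra! h
    have : Multiset.card S ≤ Fintype.card A * (e - 1) := calc
      Multiset.card S = ∑ a, S.count a :=
        (Multiset.sum_count_eq_card fun a _ => Finset.mem_univ a).symm
      _ ≤ Fintype.card A * (e - 1) := Finset.sum_le_card_nsmul _ _ _ fun a _ => by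
        have := h a; omega
    omega
  exact ⟨Multiset.replicate e a, Multiset.le_count_iff_replicate_le.1 ha,
    Multiset.card_replicate _ _, by simp [e, AddMonoid.exponent_nsmul_eq_zero]⟩

theorem EGZ_mem_egzSet [AddCommGroup A] [Finite A] : EGZ A ∈ egzSet A :=
  Nat.sInf_mem egzSet_nonempty

theorem EGZ_le_iff [AddCommGroup A] [Finite A] {ℓ : ℕ} : EGZ A ≤ ℓ ↔ ℓ ∈ egzSet A :=
  ⟨egzSet_mono EGZ_mem_egzSet, fun h => Nat.sInf_le h⟩

theorem one_le_EGZ [AddCommGroup A] [Finite A] : 1 ≤ EGZ A := by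
  by_contra! h
  obtain ⟨T, hT, hcard, -⟩ := (Nat.lt_one_iff.1 h ▸ EGZ_mem_egzSet (A := A)) 0 le_rfl
  rw [Multiset.le_zero.1 hT, Multiset.card_zero] at hcard
  exact AddMonoid.exponent_ne_zero_of_finite hcard.symm

theorem EGZ_le_one [AddCommMonoid A] [Subsingleton A] : EGZ A ≤ 1 := by
  refine Nat.sInf_le fun S hS => ?_
  obtain ⟨x, hx⟩ := Multiset.card_pos_iff_exists_mem.1 hS
  exact ⟨{x}, Multiset.singleton_le.2 hx, by simp [AddMonoid.exp_eq_one_of_subsingleton],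
    Subsingleton.elim _ _⟩

theorem egzSet_subset_of_addEquiv [AddCommMonoid A] [AddCommMonoid B] (e : A ≃+ B) :
    egzSet A ⊆ egzSet B := by
  intro ℓ h S hS
  obtain ⟨T, hT, hcard, hsum⟩ := h (S.map e.symm) (by rwa [Multiset.card_map])
  refine ⟨T.map e, by simpa using Multiset.map_le_map (f := e) hT, ?_, ?_⟩
  · rw [Multiset.card_map, hcard, AddMonoid.exponent_eq_of_addEquiv e]
  · rw [← map_multiset_sum e, hsum, map_zero]

theorem EGZ_congr [AddCommMonoid A] [AddCommMonoid B] (e : A ≃+ B) : EGZ A = EGZ B :=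
  congrArg sInf ((egzSet_subset_of_addEquiv e).antisymm (egzSet_subset_of_addEquiv e.symm))

end EGZSet

section Product

variable {G A B : Type*} [AddCommMonoid G] [AddCommMonoid A] [AddCommMonoid B]

theorem exists_le_card_eq_map_sum_eq_zero_of_mem_egzSet (π : G →+ B) {b : ℕ} (hb : b ∈ egzSet B)
    {S : Multiset G} (hS : b ≤ Multiset.card S) :
    ∃ U ≤ S, Multiset.card U = AddMonoid.exponent B ∧ π U.sum = 0 := by
  obtain ⟨T, hT, hcard, hsum⟩ := hb (S.map π) (by rwa [Multiset.card_map])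
  obtain ⟨U, hU, rfl⟩ := Multiset.exists_le_map_eq_of_le_map_s11 hT
  exact ⟨U, hU, by rwa [Multiset.card_map] at hcard, by rwa [map_multiset_sum]⟩

theorem exists_blocks_of_mem_egzSet (π : G →+ B) {b : ℕ} (hb : b ∈ egzSet B) (t : ℕ)
    {S : Multiset G} (hS : t * AddMonoid.exponent B + b ≤ Multiset.card S) :
    ∃ L : Multiset (Multiset G), Multiset.card L = t + 1 ∧ L.join ≤ S ∧
      ∀ T ∈ L, Multiset.card T = AddMonoid.exponent B ∧ π T.sum = 0 := by
  classical
  induction t generalizing S with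
  | zero =>
    obtain ⟨U, hU, hU'⟩ := exists_le_card_eq_map_sum_eq_zero_of_mem_egzSet π hb (S := S) (by omega)
    exact ⟨{U}, rfl, by simpa using hU, by simpa using hU'⟩
  | succ t ih =>
    obtain ⟨U, hU, hcard, hsum⟩ :=
      exists_le_card_eq_map_sum_eq_zero_of_mem_egzSet π hb ((Nat.le_add_left b _).trans hS)
    obtain ⟨L, hLcard, hLS, hL⟩ := ih (S := S - U) (by
      rw [Multiset.card_sub hU, hcard]; rw [Nat.succ_mul] at hS; omega)
    refine ⟨U ::ₘ L, by simp [hLcard], ?_, ?_⟩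
    · rw [Multiset.join_cons, ← add_tsub_cancel_of_le hU]
      exact add_le_add le_rfl hLS
    · simpa [hcard, hsum] using hL

theorem exponent_mul_add_mem_egzSet_prod {a b : ℕ} (ha : a + 1 ∈ egzSet A) (hb : b ∈ egzSet B)
    (hexp : (AddMonoid.exponent A).Coprime (AddMonoid.exponent B)) :
    AddMonoid.exponent B * a + b ∈ egzSet (A × B) := by
  intro S hS
  obtain ⟨L, hLcard, hLS, hL⟩ :=
    exists_blocks_of_mem_egzSet (AddMonoidHom.snd A B) hb a (S := S) (by rwa [mul_comm])
  obtain ⟨W, hW, hWcard, hWsum⟩ := ha (L.map fun T => T.sum.1) (by simp [hLcard])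
  obtain ⟨L', hL', rfl⟩ := Multiset.exists_le_map_eq_of_le_map_s11 hW
  have hL'blocks : ∀ T ∈ L', Multiset.card T = AddMonoid.exponent B ∧ T.sum.2 = 0 :=
    fun T hT => hL T (Multiset.mem_of_le hL' hT)
  refine ⟨L'.join, (Multiset.join_le_join_s11 hL').trans hLS, ?_, ?_⟩
  · rw [Multiset.card_map] at hWcard
    rw [Multiset.card_join, Multiset.map_congr rfl fun T hT => (hL'blocks T hT).1,
      Multiset.map_const', Multiset.sum_replicate, hWcard, smul_eq_mul, AddMonoid.exponent_prod,
      lcm_eq_nat_lcm, hexp.lcm_eq_mul]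
  · rw [Multiset.sum_join]
    refine Prod.ext ?_ ?_
    · calc _ = ((L'.map Multiset.sum).map (AddMonoidHom.fst A B)).sum := map_multiset_sum _ _
        _ = 0 := by rw [Multiset.map_map]; exact hWsum
    · calc _ = ((L'.map Multiset.sum).map (AddMonoidHom.snd A B)).sum := map_multiset_sum _ _
        _ = 0 := by
          rw [Multiset.map_map]
          exact Multiset.sum_eq_zero fun x hx => by
            obtain ⟨T, hT, rfl⟩ := Multiset.mem_map.1 hx
            exact (hL'blocks T hT).2

end Product

theorem EGZ_prod_le {A B : Type*} [AddCommGroup A] [AddCommGroup B] [Finite A] [Finite B]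
    (hexp : (AddMonoid.exponent A).Coprime (AddMonoid.exponent B)) :
    EGZ (A × B) ≤ AddMonoid.exponent B * (EGZ A - 1) + EGZ B := by
  refine EGZ_le_iff.2 (exponent_mul_add_mem_egzSet_prod ?_ EGZ_mem_egzSet hexp)
  rw [Nat.sub_add_cancel one_le_EGZ]
  exact EGZ_mem_egzSet

section ZModPi

variable (ι : Type*)

theorem exponent_pi_zmod_dvd (m : ℕ) : AddMonoid.exponent (ι → ZMod m) ∣ m :=
  AddMonoid.exponent_dvd_of_forall_nsmul_eq_zero fun f => funext fun i => by simp

noncomputable def piZModMulEquiv {a b : ℕ} (h : a.Coprime b) :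
    (ι → ZMod (a * b)) ≃+ (ι → ZMod a) × (ι → ZMod b) :=
  (AddEquiv.piCongrRight fun _ => (ZMod.chineseRemainder h).toAddEquiv).trans
    { Equiv.arrowProdEquivProdArrow ι (fun _ => ZMod a) (fun _ => ZMod b) with
      map_add' := fun _ _ => rfl }

end ZModPi

theorem Nat.Coprime.prod_primeFactors_mul {a b : ℕ} (h : a.Coprime b) :
    ∏ p ∈ (a * b).primeFactors, p = (∏ p ∈ a.primeFactors, p) * ∏ p ∈ b.primeFactors, p := by
  rw [h.primeFactors_mul, Finset.prod_union h.disjoint_primeFactors]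

theorem mul_radical_bound_le {a b Ra Rb C : ℕ} (ha : 1 ≤ a) (hb : 1 ≤ b) (hRa : 1 ≤ Ra)
    (hRb : 1 ≤ Rb) :
    b * (Ra * (a - 1) * C) + (Rb * (b - 1) * C + 1) ≤ Ra * Rb * (a * b - 1) * C + 1 := by
  have hab : a * b - 1 = b * (a - 1) + (b - 1) := by
    zify [ha, hb, Nat.one_le_iff_ne_zero.2 (Nat.mul_ne_zero (by omega) (by omega) : a * b ≠ 0)]
    ring
  calc b * (Ra * (a - 1) * C) + (Rb * (b - 1) * C + 1)
      ≤ Rb * (b * (Ra * (a - 1) * C)) + Ra * (Rb * (b - 1) * C) + 1 := by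
        have h₁ := Nat.le_mul_of_pos_left (b * (Ra * (a - 1) * C)) hRb
        have h₂ := Nat.le_mul_of_pos_left (Rb * (b - 1) * C) hRa
        omega
    _ = Ra * Rb * (a * b - 1) * C + 1 := by rw [hab]; ring

theorem EGZ_pi_zmod_le_of_primePow {ι : Type*} [Finite ι] (C : ℕ) {k : ℕ} (hk : k ≠ 0)
    (hpp : ∀ p : ℕ, p.Prime → p ∣ k → ∀ β : ℕ, 1 ≤ β →
      EGZ (ι → ZMod (p ^ β)) ≤ p * (p ^ β - 1) * C + 1) :
    EGZ (ι → ZMod k) ≤ (∏ p ∈ k.primeFactors, p) * (k - 1) * C + 1 := by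
  induction k using Nat.recOnPosPrimePosCoprime with
  | prime_pow p β hp hβ =>
    rw [Nat.primeFactors_prime_pow hβ.ne' hp, Finset.prod_singleton]
    exact hpp p hp (dvd_pow_self p hβ.ne') β hβ
  | zero => exact absurd rfl hk
  | one => simpa using EGZ_le_one
  | coprime a b ha hb hab iha ihb =>
    have : NeZero a := ⟨by omega⟩
    have : NeZero b := ⟨by omega⟩
    have hEa := iha (by omega) fun p hp hpa => hpp p hp (hpa.mul_right b)
    have hEb := ihb (by omega) fun p hp hpb => hpp p hp (hpb.mul_left a)
    have hexp : (AddMonoid.exponent (ι → ZMod a)).Coprime (AddMonoid.exponent (ι → ZMod b)) :=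
      (hab.coprime_dvd_left (exponent_pi_zmod_dvd ι a)).coprime_dvd_right
        (exponent_pi_zmod_dvd ι b)
    have hRpos : ∀ n : ℕ, 1 ≤ ∏ p ∈ n.primeFactors, p := fun n =>
      Finset.prod_pos fun p hp => (Nat.prime_of_mem_primeFactors hp).pos
    rw [EGZ_congr (piZModMulEquiv ι hab), hab.prod_primeFactors_mul]
    calc _ ≤ AddMonoid.exponent (ι → ZMod b) * (EGZ (ι → ZMod a) - 1) + EGZ (ι → ZMod b) :=
          EGZ_prod_le hexp
      _ ≤ b * ((∏ p ∈ a.primeFactors, p) * (a - 1) * C) +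
            ((∏ p ∈ b.primeFactors, p) * (b - 1) * C + 1) := by
          gcongr
          · exact Nat.le_of_dvd (by omega) (exponent_pi_zmod_dvd ι b)
          · omega
      _ ≤ _ := mul_radical_bound_le (by omega) (by omega) (hRpos a) (hRpos b)

theorem EGZ_composite_general (k n : ℕ) (hk : 2 ≤ k)
    (hpp : ∀ p : ℕ, p.Prime → p ∣ k → ∀ β : ℕ, 1 ≤ β →
      EGZ (Fin n → ZMod (p ^ β)) ≤ p * (p ^ β - 1) * Nat.choose (2 * n) n + 1) :
    EGZ (Fin n → ZMod k) ≤ (∏ p ∈ k.primeFactors, p) * (k - 1) * Nat.choose (2 * n) n + 1 :=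
  EGZ_pi_zmod_le_of_primePow _ (by omega) hpp

/-- If `k ≥ 2` is odd and the prime-power bound `s((ℤ/p^βℤ)^n) ≤ p(p^β-1)·C(2n,n) + 1` holds
for every prime `p ∣ k` and every `β ≥ 1`, then
`s((ℤ/kℤ)^n) ≤ (∏_{p ∣ k} p)·(k-1)·C(2n,n) + 1`. -/
theorem EGZ_composite (k n : ℕ) (hk : 2 ≤ k) (hodd : Odd k) (hn : 1 ≤ n)
    (hpp : ∀ p : ℕ, p.Prime → p ∣ k → ∀ β : ℕ, 1 ≤ β →
      EGZ (Fin n → ZMod (p ^ β)) ≤ p * (p ^ β - 1) * Nat.choose (2 * n) n + 1) :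
    EGZ (Fin n → ZMod k) ≤ (∏ p ∈ k.primeFactors, p) * (k - 1) * Nat.choose (2 * n) n + 1 :=
  EGZ_composite_general k n hk hpp
end

section
/- As the prime power q tends to infinity, γ_{q,q} := inf_{0<x<1} (1-x^q)/(1-x) · x^{-(q-1)/q} satisfies γ_{q,q} / (((2^q - 1)/2^q) · 2^{(2q-1)/q}) → 1; in particular γ_{q,q} < 4 for all q ≥ 2. -/
open Filter

/-- Naslund's constant `γ_{q,q} = inf_{0<x<1} (1-x^q)/(1-x) · x^{-(q-1)/q}`. -/
noncomputable def gammaQQ (q : ℕ) : ℝ :=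
  sInf ((fun x : ℝ => (1 - x ^ q) / (1 - x) * x ^ (-(((q : ℝ) - 1) / q))) '' Set.Ioo 0 1)

open Set Topology

/-! With `f = naslundFun q` and `t = (q-1)/q`, the elementary bound `x^t (1-x) ≤ 4^{-t}`
gives `f(x) ≥ (1-x^q)·4^t` on `(0,1)`, while on `[3/4,1)` the geometric sum gives
`f(x) ≥ 4(1-(3/4)^q)`. Hence `(1-(3/4)^q)·4^t ≤ γ_{q,q} ≤ f(1/2) = 2(1-2^{-q})·2^t`,
and both bounds tend to `4`. -/

lemma rpow_mul_one_sub_le {x t : ℝ} (hx : 0 ≤ x) (ht₀ : 0 ≤ t) (ht₁ : t ≤ 1) :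
    x ^ t * (1 - x) ≤ 4⁻¹ ^ t := by
  rcases le_or_gt x 4⁻¹ with hx4 | hx4
  · calc x ^ t * (1 - x) ≤ 4⁻¹ ^ t * 1 := by
          gcongr <;> linarith
      _ = 4⁻¹ ^ t := mul_one _
  · have hx0 : 0 < x := by linarith
    have hpow : x ^ (t - 1) ≤ 4⁻¹ ^ (t - 1) :=
      Real.rpow_le_rpow_of_nonpos (by norm_num) hx4.le (by linarith)
    have hquad : x * (1 - x) ≤ 4⁻¹ := by nlinarith [sq_nonneg (x - 2⁻¹)]
    have hnonneg : 0 ≤ x ^ (t - 1) := Real.rpow_nonneg hx0.le _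
    calc x ^ t * (1 - x) = x * (1 - x) * x ^ (t - 1) := by
          rw [Real.rpow_sub hx0, Real.rpow_one]; field_simp
      _ ≤ 4⁻¹ * 4⁻¹ ^ (t - 1) := by
          nlinarith [mul_le_mul_of_nonneg_right hquad hnonneg]
      _ = 4⁻¹ ^ t := by
          rw [Real.rpow_sub (by norm_num), Real.rpow_one]; field_simp

lemma one_sub_pow_div_one_sub_le {b x : ℝ} (hb : 0 ≤ b) (hbx : b ≤ x) (hx : x < 1) (n : ℕ) :
    (1 - b ^ n) / (1 - b) ≤ (1 - x ^ n) / (1 - x) := by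
  have hgeom {y : ℝ} (hy : y < 1) : (1 - y ^ n) / (1 - y) = ∑ i ∈ Finset.range n, y ^ i := by
    rw [geom_sum_eq hy.ne, ← neg_div_neg_eq, neg_sub, neg_sub]
  rw [hgeom hx, hgeom (hbx.trans_lt hx)]
  exact Finset.sum_le_sum fun i _ => pow_le_pow_left₀ hb hbx i

lemma natCast_sub_one_div_self_nonneg (q : ℕ) : 0 ≤ ((q : ℝ) - 1) / q := by
  rcases q.eq_zero_or_pos with rfl | hq
  · simp
  · exact div_nonneg (sub_nonneg.mpr (Nat.one_le_cast.mpr hq)) q.cast_nonneg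

lemma natCast_sub_one_div_self_le_one (q : ℕ) : ((q : ℝ) - 1) / q ≤ 1 :=
  div_le_one_of_le₀ (by linarith) q.cast_nonneg

lemma tendsto_natCast_sub_one_div_self :
    Tendsto (fun q : ℕ => ((q : ℝ) - 1) / q) atTop (𝓝 1) := by
  have h : (fun q : ℕ => 1 - (q : ℝ)⁻¹) =ᶠ[atTop] fun q : ℕ => ((q : ℝ) - 1) / q := by
    filter_upwards [eventually_ne_atTop 0] with q hq
    field_simp
  simpa using (tendsto_const_nhds.sub tendsto_inv_atTop_nhds_zero_nat).congr' h

noncomputable def naslundFun (q : ℕ) (x : ℝ) : ℝ :=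
  (1 - x ^ q) / (1 - x) * x ^ (-(((q : ℝ) - 1) / q))

section naslundFun

variable {q : ℕ} {x : ℝ}

lemma one_sub_pow_mul_four_rpow_le_naslundFun (hx : x ∈ Ioo 0 1) :
    (1 - x ^ q) * 4 ^ (((q : ℝ) - 1) / q) ≤ naslundFun q x := by
  set t := ((q : ℝ) - 1) / q
  obtain ⟨hx0, hx1⟩ := hx
  have hden : 0 < x ^ t * (1 - x) := mul_pos (Real.rpow_pos_of_pos hx0 t) (by linarith)
  have key : (4 : ℝ) ^ t ≤ x ^ (-t) / (1 - x) := by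
    calc (4 : ℝ) ^ t = (4⁻¹ ^ t)⁻¹ := by rw [Real.inv_rpow (by norm_num), inv_inv]
      _ ≤ (x ^ t * (1 - x))⁻¹ :=
          inv_anti₀ hden (rpow_mul_one_sub_le hx0.le (natCast_sub_one_div_self_nonneg q)
            (natCast_sub_one_div_self_le_one q))
      _ = x ^ (-t) / (1 - x) := by rw [Real.rpow_neg hx0.le, mul_inv, div_eq_mul_inv]
  have hnum : 0 ≤ 1 - x ^ q := by linarith [pow_le_one₀ (n := q) hx0.le hx1.le]
  calc (1 - x ^ q) * 4 ^ t ≤ (1 - x ^ q) * (x ^ (-t) / (1 - x)) := by gcongr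
    _ = naslundFun q x := by rw [naslundFun]; ring

lemma one_sub_pow_div_one_sub_le_naslundFun (hx : x ∈ Ioo 0 1) :
    (1 - x ^ q) / (1 - x) ≤ naslundFun q x := by
  obtain ⟨hx0, hx1⟩ := hx
  have hratio : 0 ≤ (1 - x ^ q) / (1 - x) :=
    div_nonneg (by linarith [pow_le_one₀ (n := q) hx0.le hx1.le]) (by linarith)
  refine le_mul_of_one_le_right hratio ?_
  exact Real.one_le_rpow_of_pos_of_le_one_of_nonpos hx0 hx1.le
    (neg_nonpos.mpr (natCast_sub_one_div_self_nonneg q))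

lemma naslundFun_lower_bound (hx : x ∈ Ioo 0 1) :
    (1 - (3 / 4 : ℝ) ^ q) * 4 ^ (((q : ℝ) - 1) / q) ≤ naslundFun q x := by
  obtain ⟨hx0, hx1⟩ := hx
  rcases le_or_gt x (3 / 4) with hx34 | hx34
  · refine le_trans ?_ (one_sub_pow_mul_four_rpow_le_naslundFun ⟨hx0, hx1⟩)
    gcongr
  · calc (1 - (3 / 4 : ℝ) ^ q) * 4 ^ (((q : ℝ) - 1) / q) ≤ (1 - (3 / 4 : ℝ) ^ q) * 4 := by
          gcongr
          · linarith [pow_le_one₀ (n := q) (by norm_num : (0 : ℝ) ≤ 3 / 4) (by norm_num)]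
          · simpa using Real.rpow_le_rpow_of_exponent_le (by norm_num : (1 : ℝ) ≤ 4)
              (natCast_sub_one_div_self_le_one q)
      _ = (1 - (3 / 4 : ℝ) ^ q) / (1 - 3 / 4) := by ring
      _ ≤ (1 - x ^ q) / (1 - x) := one_sub_pow_div_one_sub_le (by norm_num) hx34.le hx1 q
      _ ≤ naslundFun q x := one_sub_pow_div_one_sub_le_naslundFun ⟨hx0, hx1⟩

end naslundFun

lemma naslundFun_half (q : ℕ) :
    naslundFun q (1 / 2) = 2 * (1 - (1 / 2 : ℝ) ^ q) * 2 ^ (((q : ℝ) - 1) / q) := by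
  rw [naslundFun, Real.rpow_neg (by norm_num), one_div, Real.inv_rpow (by norm_num), inv_inv]
  ring

lemma gammaQQ_eq (q : ℕ) : gammaQQ q = sInf (naslundFun q '' Ioo 0 1) := rfl

lemma le_gammaQQ (q : ℕ) : (1 - (3 / 4 : ℝ) ^ q) * 4 ^ (((q : ℝ) - 1) / q) ≤ gammaQQ q := by
  rw [gammaQQ_eq]
  have hhalf : (1 / 2 : ℝ) ∈ Ioo 0 1 := ⟨by norm_num, by norm_num⟩
  refine le_csInf ⟨_, mem_image_of_mem _ hhalf⟩ ?_
  rintro _ ⟨x, hx, rfl⟩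
  exact naslundFun_lower_bound hx

lemma gammaQQ_le_naslundFun {q : ℕ} {x : ℝ} (hx : x ∈ Ioo 0 1) :
    gammaQQ q ≤ naslundFun q x :=
  csInf_le ⟨_, forall_mem_image.mpr fun _ hy => naslundFun_lower_bound hy⟩
    (mem_image_of_mem _ hx)

lemma gammaQQ_le_naslundFun_half (q : ℕ) : gammaQQ q ≤ naslundFun q (1 / 2) :=
  gammaQQ_le_naslundFun ⟨by norm_num, by norm_num⟩

lemma naslundFun_half_lt_four (q : ℕ) : naslundFun q (1 / 2) < 4 := by
  rw [naslundFun_half]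
  have h2t : (2 : ℝ) ^ (((q : ℝ) - 1) / q) ≤ 2 := by
    simpa using Real.rpow_le_rpow_of_exponent_le (by norm_num : (1 : ℝ) ≤ 2)
      (natCast_sub_one_div_self_le_one q)
  have h2t0 : 0 < (2 : ℝ) ^ (((q : ℝ) - 1) / q) := Real.rpow_pos_of_pos (by norm_num) _
  have hhalf : 0 < (1 / 2 : ℝ) ^ q := by positivity
  nlinarith

lemma tendsto_naslundFun_half : Tendsto (fun q => naslundFun q (1 / 2)) atTop (𝓝 4) := by
  simp only [naslundFun_half]
  have := ((tendsto_const_nhds (x := (1 : ℝ))).sub (tendsto_pow_atTop_nhds_zero_of_lt_one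
    (by norm_num : (0 : ℝ) ≤ 1 / 2) (by norm_num))).const_mul 2 |>.mul
    (tendsto_const_nhds.rpow tendsto_natCast_sub_one_div_self (Or.inl two_ne_zero))
  norm_num at this
  exact this

lemma tendsto_gammaQQ : Tendsto gammaQQ atTop (𝓝 4) := by
  have hlower : Tendsto (fun q : ℕ => (1 - (3 / 4 : ℝ) ^ q) * 4 ^ (((q : ℝ) - 1) / q))
      atTop (𝓝 4) := by
    have := ((tendsto_const_nhds (x := (1 : ℝ))).sub (tendsto_pow_atTop_nhds_zero_of_lt_one
      (by norm_num : (0 : ℝ) ≤ 3 / 4) (by norm_num))).mul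
      (tendsto_const_nhds.rpow tendsto_natCast_sub_one_div_self (Or.inl four_ne_zero))
    simpa using this
  exact tendsto_of_tendsto_of_tendsto_of_le_of_le hlower tendsto_naslundFun_half le_gammaQQ
    gammaQQ_le_naslundFun_half

lemma naslundFun_half' (q : ℕ) :
    naslundFun q (1 / 2) =
      ((2 ^ q - 1 : ℝ) / 2 ^ q) * (2 : ℝ) ^ ((2 * (q : ℝ) - 1) / q) := by
  rcases q.eq_zero_or_pos with rfl | hq
  · simp [naslundFun]
  have hexp : (2 * (q : ℝ) - 1) / q = 1 + ((q : ℝ) - 1) / q := by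
    field_simp; ring
  rw [naslundFun_half, hexp, Real.rpow_add (by norm_num), Real.rpow_one, one_div_pow]
  field_simp

/-- As the prime power `q → ∞`, `γ_{q,q} ∼ ((2^q - 1)/2^q)·2^{(2q-1)/q}`; in particular
`γ_{q,q} < 4` for all `q ≥ 2`. -/
theorem gammaQQ_asymptotic :
    Tendsto (fun q : ℕ =>
        gammaQQ q / (((2 ^ q - 1 : ℝ) / 2 ^ q) * (2 : ℝ) ^ ((2 * (q : ℝ) - 1) / q)))
      (atTop ⊓ 𝓟 {q : ℕ | IsPrimePow q}) (nhds 1) ∧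
    ∀ q : ℕ, 2 ≤ q → gammaQQ q < 4 := by
  refine ⟨?_, fun q _ => (gammaQQ_le_naslundFun_half q).trans_lt (naslundFun_half_lt_four q)⟩
  simp only [← naslundFun_half']
  have hratio := tendsto_gammaQQ.div tendsto_naslundFun_half four_ne_zero
  rw [div_self four_ne_zero] at hratio
  exact hratio.mono_left inf_le_left
end
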